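/- arXiv:2603.23814 — 12 statements merged into one kernel-verified Lean document; each statement's English description precedes it below -/
import Mathlib

section
/- Let τ > 0 and let u_a, u_b : [0,∞) → ℝ be measurable and essentially bounded. Let y_a, y_b : [0,∞) → ℝ be given by y_i(t) = e^{−t/τ} y_i(0) + (1/τ)∫_0^t e^{−(t−s)/τ} u_i(s) ds (the solutions of the low-pass filter τ ẏ = −y + u). Then for all t ≥ 0: |y_a(t) − y_b(t)| ≤ e^{−t/τ}|y_a(0) − y_b(0)| + 2·esssup_{s∈[0,t]} e^{−(t−s)/(2τ)}|u_a(s) − u_b(s)|. -/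
open MeasureTheory Filter Set

noncomputable def essSupOn (f : ℝ → ℝ) (s : Set ℝ) : ℝ :=
  essSup f (volume.restrict s)

lemma essSupOn_zero' (f : ℝ → ℝ) (s : Set ℝ) (hs : volume s = 0) : essSupOn f s = 0 := by
  have h0 : volume.restrict s = 0 := by
    rw [Measure.restrict_eq_zero]; exact hs
  rw [essSupOn, h0, essSup_eq_sInf]
  have h1 : { a : ℝ | (0 : Measure ℝ) { x | a < f x } = 0 } = Set.univ := by
    ext a; simp
  rw [h1]
  refine Real.sInf_of_not_bddBelow ?_
  rintro ⟨x, hx⟩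
  have := hx (mem_univ (x - 1))
  linarith

lemma keyInt (t τ : ℝ) (ht : 0 ≤ t) (hτ : 0 < τ) (u : ℝ → ℝ)
    (hu : Measurable u) (hb : ∃ C, ∀ᵐ s ∂volume, |u s| ≤ C) :
    IntervalIntegrable (fun s => Real.exp (-(t - s) / τ) * u s) volume 0 t := by
  obtain ⟨C, hC⟩ := hb
  rw [intervalIntegrable_iff_integrableOn_Ioc_of_le ht]
  have hm : Measurable (fun s : ℝ => Real.exp (-(t - s) / τ) * u s) := by
    refine Measurable.mul ?_ hu
    exact Real.measurable_exp.comp (((measurable_const.sub measurable_id).neg).div_const τ)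
  refine Integrable.mono' (integrable_const (max C 0)) hm.aestronglyMeasurable ?_
  filter_upwards [ae_restrict_of_ae hC, ae_restrict_mem measurableSet_Ioc] with s hs hmem
  rw [Real.norm_eq_abs, abs_mul, Real.abs_exp]
  calc Real.exp (-(t - s) / τ) * |u s| ≤ 1 * max C 0 := by
        apply mul_le_mul _ (hs.trans (le_max_left _ _)) (abs_nonneg _) zero_le_one
        rw [Real.exp_le_one_iff]
        apply div_nonpos_of_nonpos_of_nonneg _ hτ.le
        simp; linarith [hmem.2]
    _ = max C 0 := one_mul _

/-- fading-memory inequality for the first-order low-pass filter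
`τ ẏ = −y + u`, with memory kernel `w(Δt) = exp(−Δt/(2τ))`. -/
theorem stmt2 (τ : ℝ) (hτ : 0 < τ)
    (u_a u_b : ℝ → ℝ)
    (hua : Measurable u_a) (hub : Measurable u_b)
    (hba : ∃ C, ∀ᵐ s ∂volume, |u_a s| ≤ C)
    (hbb : ∃ C, ∀ᵐ s ∂volume, |u_b s| ≤ C)
    (y_a y_b : ℝ → ℝ)
    (hya : ∀ t ≥ (0:ℝ), y_a t =
      Real.exp (-t / τ) * y_a 0 + (1 / τ) * ∫ s in (0:ℝ)..t, Real.exp (-(t - s) / τ) * u_a s)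
    (hyb : ∀ t ≥ (0:ℝ), y_b t =
      Real.exp (-t / τ) * y_b 0 + (1 / τ) * ∫ s in (0:ℝ)..t, Real.exp (-(t - s) / τ) * u_b s) :
    ∀ t ≥ (0:ℝ), |y_a t - y_b t| ≤
      Real.exp (-t / τ) * |y_a 0 - y_b 0| +
      2 * essSupOn (fun s => Real.exp (-(t - s) / (2 * τ)) * |u_a s - u_b s|) (Set.Icc 0 t) := by
  intro t ht
  rcases eq_or_lt_of_le ht with rfl | htpos
  · -- t = 0
    rw [hya 0 le_rfl, hyb 0 le_rfl]
    have h0 := essSupOn_zero' (fun s => Real.exp (-(0 - s) / (2 * τ)) * |u_a s - u_b s|)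
      (Set.Icc 0 0) (by simp)
    simp only [h0]
    simp
  · -- t > 0
    set f : ℝ → ℝ := fun s => Real.exp (-(t - s) / (2 * τ)) * |u_a s - u_b s| with hf
    set M : ℝ := essSupOn f (Set.Icc 0 t) with hM
    set μ' := volume.restrict (Set.Icc (0:ℝ) t) with hμ'
    obtain ⟨Ca, hCa⟩ := hba
    obtain ⟨Cb, hCb⟩ := hbb
    -- boundedness of f a.e.
    have hbdd : IsBoundedUnder (· ≤ ·) (ae μ') f := by
      refine ⟨Ca + Cb, ?_⟩
      rw [eventually_map]
      filter_upwards [ae_restrict_of_ae hCa, ae_restrict_of_ae hCb,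
        ae_restrict_mem measurableSet_Icc] with s ha hb hmem
      have h1 : |u_a s - u_b s| ≤ Ca + Cb :=
        (abs_sub _ _).trans (add_le_add ha hb)
      calc f s ≤ 1 * |u_a s - u_b s| := by
            refine mul_le_mul_of_nonneg_right ?_ (abs_nonneg _)
            rw [Real.exp_le_one_iff]
            apply div_nonpos_of_nonpos_of_nonneg _ (by linarith)
            simp only [neg_nonpos, sub_nonneg]
            exact hmem.2
        _ ≤ Ca + Cb := by rw [one_mul]; exact h1
    have hae : ∀ᵐ s ∂μ', f s ≤ M := ae_le_essSup hbdd
    have hμ'ne : μ' ≠ 0 := by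
      rw [hμ', Ne, Measure.restrict_eq_zero, Real.volume_Icc]
      simp [ENNReal.ofReal_eq_zero]
      linarith
    have hMnn : 0 ≤ M := by
      have : (ae μ').NeBot := ae_neBot.2 hμ'ne
      obtain ⟨s, hs⟩ := hae.exists
      exact le_trans (mul_nonneg (Real.exp_pos _).le (abs_nonneg _)) hs
    -- integrability
    have Ia := keyInt t τ ht hτ u_a hua ⟨Ca, hCa⟩
    have Ib := keyInt t τ ht hτ u_b hub ⟨Cb, hCb⟩
    have Iab : IntervalIntegrable (fun s => Real.exp (-(t - s) / τ) * (u_a s - u_b s))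
        volume 0 t := by
      refine keyInt t τ ht hτ _ (hua.sub hub) ⟨Ca + Cb, ?_⟩
      filter_upwards [hCa, hCb] with s ha hb
      exact (abs_sub _ _).trans (add_le_add ha hb)
    -- difference formula
    have hsub : (∫ s in (0:ℝ)..t, Real.exp (-(t - s) / τ) * (u_a s - u_b s)) =
        (∫ s in (0:ℝ)..t, Real.exp (-(t - s) / τ) * u_a s) -
        (∫ s in (0:ℝ)..t, Real.exp (-(t - s) / τ) * u_b s) := by
      rw [← intervalIntegral.integral_sub Ia Ib]
      congr 1; ext s; ring
    have hdiff : y_a t - y_b t = Real.exp (-t / τ) * (y_a 0 - y_b 0) +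
        (1 / τ) * ∫ s in (0:ℝ)..t, Real.exp (-(t - s) / τ) * (u_a s - u_b s) := by
      rw [hya t ht, hyb t ht, hsub]; ring
    -- the exponential integral
    have hIexp : (∫ s in (0:ℝ)..t, Real.exp (-(t - s) / (2 * τ))) ≤ 2 * τ := by
      have hF : ∀ s ∈ Set.uIcc (0:ℝ) t, HasDerivAt
          (fun s => (2 * τ) * Real.exp (-(t - s) / (2 * τ)))
          (Real.exp (-(t - s) / (2 * τ))) s := by
        intro s _
        have h1 : HasDerivAt (fun s : ℝ => -(t - s) / (2 * τ)) (1 / (2 * τ)) s := by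
          have h := ((hasDerivAt_id s).sub_const t).div_const (2 * τ)
          simpa [neg_sub] using h
        have h2 := (h1.exp).const_mul (2 * τ)
        refine h2.congr_deriv ?_
        have h2τ : (2 * τ) ≠ 0 := by positivity
        rw [mul_comm (Real.exp _) (1 / (2 * τ)), ← mul_assoc, mul_one_div_cancel h2τ, one_mul]
      have hcont : IntervalIntegrable (fun s : ℝ => Real.exp (-(t - s) / (2 * τ))) volume 0 t :=
        (Real.continuous_exp.comp (((continuous_const.sub continuous_id).neg).div_const
          (2 * τ))).intervalIntegrable 0 t
      rw [intervalIntegral.integral_eq_sub_of_hasDerivAt hF hcont]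
      have h3 : (0:ℝ) < Real.exp (-(t - 0) / (2 * τ)) := Real.exp_pos _
      have h4 : -(t - t) / (2 * τ) = 0 := by ring
      rw [h4, Real.exp_zero]
      nlinarith
    have hIexpnn : (0:ℝ) ≤ ∫ s in (0:ℝ)..t, Real.exp (-(t - s) / (2 * τ)) :=
      intervalIntegral.integral_nonneg ht (fun s _ => (Real.exp_pos _).le)
    -- main integral bound
    have habs : |∫ s in (0:ℝ)..t, Real.exp (-(t - s) / τ) * (u_a s - u_b s)| ≤
        ∫ s in (0:ℝ)..t, |Real.exp (-(t - s) / τ) * (u_a s - u_b s)| :=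
      intervalIntegral.abs_integral_le_integral_abs ht
    have hmono : (∫ s in (0:ℝ)..t, |Real.exp (-(t - s) / τ) * (u_a s - u_b s)|) ≤
        ∫ s in (0:ℝ)..t, Real.exp (-(t - s) / (2 * τ)) * M := by
      refine intervalIntegral.integral_mono_ae_restrict ht Iab.abs ?_ ?_
      · exact ((Real.continuous_exp.comp (((continuous_const.sub continuous_id).neg).div_const
          (2 * τ))).mul continuous_const).intervalIntegrable 0 t
      · filter_upwards [hae] with s hs
        have hsplit : Real.exp (-(t - s) / τ) =
            Real.exp (-(t - s) / (2 * τ)) * Real.exp (-(t - s) / (2 * τ)) := by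
          rw [← Real.exp_add]
          congr 1
          field_simp; ring
        rw [abs_mul, Real.abs_exp, hsplit, mul_assoc]
        exact mul_le_mul_of_nonneg_left hs (Real.exp_pos _).le
    have hmul : (∫ s in (0:ℝ)..t, Real.exp (-(t - s) / (2 * τ)) * M) ≤ 2 * τ * M := by
      rw [intervalIntegral.integral_mul_const]
      exact mul_le_mul_of_nonneg_right hIexp hMnn
    -- put it together
    rw [hdiff]
    calc |Real.exp (-t / τ) * (y_a 0 - y_b 0) +
          (1 / τ) * ∫ s in (0:ℝ)..t, Real.exp (-(t - s) / τ) * (u_a s - u_b s)|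
        ≤ Real.exp (-t / τ) * |y_a 0 - y_b 0| +
          (1 / τ) * |∫ s in (0:ℝ)..t, Real.exp (-(t - s) / τ) * (u_a s - u_b s)| := by
          refine (abs_add_le _ _).trans ?_
          rw [abs_mul, abs_mul, Real.abs_exp, abs_of_pos (by positivity : (0:ℝ) < 1 / τ)]
      _ ≤ Real.exp (-t / τ) * |y_a 0 - y_b 0| + (1 / τ) * (2 * τ * M) :=
          add_le_add_right (mul_le_mul_of_nonneg_left
            (habs.trans (hmono.trans hmul)) (by positivity)) _
      _ = Real.exp (-t / τ) * |y_a 0 - y_b 0| + 2 * M := by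
          field_simp
end

section
/- Let w be a memory kernel, β of class KL, γ of class K∞. Let u_a, u_b : [0,∞) → ℝ^m be measurable and essentially bounded with ‖u_a(t) − u_b(t)‖ → 0 as t → ∞, let x_{0,a}, x_{0,b} ∈ ℝ^n, and let y_a, y_b : [0,∞) → ℝ^p satisfy, for all t ≥ 0, ‖y_a(t) − y_b(t)‖ ≤ β(‖x_{0,a} − x_{0,b}‖, t) + γ(esssup_{s∈[0,t]} w(t−s)‖u_a(s) − u_b(s)‖). Then ‖y_a(t) − y_b(t)‖ → 0 as t → ∞. -/
open MeasureTheory Filter Set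

/-- Class `K∞` comparison functions. -/
def ClassKInf (γ : ℝ → ℝ) : Prop :=
  ContinuousOn γ (Set.Ici 0) ∧ StrictMonoOn γ (Set.Ici 0) ∧ γ 0 = 0 ∧
    (∀ r ≥ (0:ℝ), 0 ≤ γ r) ∧ Tendsto γ atTop atTop

/-- Class `KL` comparison functions. -/
def ClassKL (β : ℝ → ℝ → ℝ) : Prop :=
  ContinuousOn (fun p : ℝ × ℝ => β p.1 p.2) (Set.Ici 0 ×ˢ Set.Ici 0) ∧
  (∀ s ≥ (0:ℝ), StrictMonoOn (fun r => β r s) (Set.Ici 0) ∧ β 0 s = 0) ∧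
  (∀ r ≥ (0:ℝ), AntitoneOn (fun s => β r s) (Set.Ici 0) ∧
    Tendsto (fun s => β r s) atTop (nhds 0)) ∧
  (∀ r ≥ (0:ℝ), ∀ s ≥ (0:ℝ), 0 ≤ β r s)

/-- Memory kernels: continuous nonincreasing `w : [0,∞) → [0,1]` tending to `0`. -/
def MemoryKernel (w : ℝ → ℝ) : Prop :=
  ContinuousOn w (Set.Ici 0) ∧ AntitoneOn w (Set.Ici 0) ∧
    (∀ t ≥ (0:ℝ), 0 ≤ w t ∧ w t ≤ 1) ∧ Tendsto w atTop (nhds 0)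

/-- converging inputs yield converging outputs for systems satisfying a
fading-memory inequality. -/
theorem stmt3 {m n p : ℕ}
    (w : ℝ → ℝ) (hw : MemoryKernel w)
    (β : ℝ → ℝ → ℝ) (hβ : ClassKL β)
    (γ : ℝ → ℝ) (hγ : ClassKInf γ)
    (u_a u_b : ℝ → EuclideanSpace ℝ (Fin m))
    (hua : Measurable u_a) (hub : Measurable u_b)
    (hba : ∃ C, ∀ᵐ s ∂volume, ‖u_a s‖ ≤ C)
    (hbb : ∃ C, ∀ᵐ s ∂volume, ‖u_b s‖ ≤ C)
    (huconv : Tendsto (fun t => ‖u_a t - u_b t‖) atTop (nhds 0))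
    (x0a x0b : EuclideanSpace ℝ (Fin n))
    (y_a y_b : ℝ → EuclideanSpace ℝ (Fin p))
    (hFM : ∀ t ≥ (0:ℝ), ‖y_a t - y_b t‖ ≤ β ‖x0a - x0b‖ t +
      γ (essSupOn (fun s => w (t - s) * ‖u_a s - u_b s‖) (Set.Icc 0 t))) :
    Tendsto (fun t => ‖y_a t - y_b t‖) atTop (nhds 0) := by
  obtain ⟨hwc, hwa, hwb, hwt⟩ := hw
  obtain ⟨Ca, hCa⟩ := hba
  obtain ⟨Cb, hCb⟩ := hbb
  set D : ℝ := max (Ca + Cb) 0 with hD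
  have hD0 : 0 ≤ D := le_max_right _ _
  have hDbound : ∀ᵐ s ∂(volume : Measure ℝ), ‖u_a s - u_b s‖ ≤ D := by
    filter_upwards [hCa, hCb] with s h1 h2
    calc ‖u_a s - u_b s‖ ≤ ‖u_a s‖ + ‖u_b s‖ := norm_sub_le _ _
    _ ≤ Ca + Cb := add_le_add h1 h2
    _ ≤ D := le_max_left _ _
  set g : ℝ → ℝ := fun t => essSupOn (fun s => w (t - s) * ‖u_a s - u_b s‖) (Set.Icc 0 t)
    with hgdef
  -- key estimate on the essential supremum
  have key : ∀ ε > (0:ℝ), ∀ᶠ t in atTop, 0 ≤ g t ∧ g t ≤ ε := by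
    intro ε hε
    have hD1 : (0:ℝ) < D + 1 := by linarith
    have hε' : 0 < ε / (D + 1) := div_pos hε hD1
    obtain ⟨T2, hT2⟩ := (hwt.eventually_lt_const hε').exists_forall_of_atTop
    obtain ⟨T1, hT1⟩ := (huconv.eventually_lt_const hε).exists_forall_of_atTop
    filter_upwards [eventually_ge_atTop (1:ℝ), eventually_ge_atTop (T1 + T2),
      eventually_ge_atTop T2] with t ht1 ht12 htT2
    have ht0 : (0:ℝ) ≤ t := by linarith
    set μt := (volume : Measure ℝ).restrict (Set.Icc 0 t) with hμt
    have hμne : μt ≠ 0 := by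
      have hv : μt (Set.Icc 0 t) = ENNReal.ofReal (t - 0) := by
        rw [hμt, Measure.restrict_apply_self, Real.volume_Icc]
      intro h
      rw [h] at hv
      simp only [Measure.coe_zero, Pi.zero_apply] at hv
      have hv' := hv.symm
      rw [ENNReal.ofReal_eq_zero] at hv'
      linarith
    haveI : (ae μt).NeBot := ae_neBot.2 hμne
    have hmem : ∀ᵐ s ∂μt, s ∈ Set.Icc 0 t := ae_restrict_mem measurableSet_Icc
    have hDr : ∀ᵐ s ∂μt, ‖u_a s - u_b s‖ ≤ D := ae_restrict_of_ae hDbound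
    have hnonneg : ∀ᵐ s ∂μt, 0 ≤ w (t - s) * ‖u_a s - u_b s‖ := by
      filter_upwards [hmem] with s hs
      exact mul_nonneg (hwb (t - s) (by linarith [hs.2])).1 (norm_nonneg _)
    have hupperD : ∀ᵐ s ∂μt, w (t - s) * ‖u_a s - u_b s‖ ≤ D := by
      filter_upwards [hmem, hDr] with s hs hd
      calc w (t - s) * ‖u_a s - u_b s‖ ≤ 1 * D :=
            mul_le_mul (hwb (t - s) (by linarith [hs.2])).2 hd (norm_nonneg _) zero_le_one
        _ = D := one_mul D
    have hbdd : IsBoundedUnder (· ≤ ·) (ae μt) (fun s => w (t - s) * ‖u_a s - u_b s‖) :=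
      ⟨D, eventually_map.2 hupperD⟩
    have hcobdd : IsCoboundedUnder (· ≤ ·) (ae μt) (fun s => w (t - s) * ‖u_a s - u_b s‖) :=
      IsBoundedUnder.isCoboundedUnder_le ⟨0, eventually_map.2 hnonneg⟩
    have hupper : ∀ᵐ s ∂μt, w (t - s) * ‖u_a s - u_b s‖ ≤ ε := by
      filter_upwards [hmem, hDr] with s hs hd
      rcases le_or_gt s (t - T2) with hcase | hcase
      · have hw2 : w (t - s) < ε / (D + 1) := hT2 (t - s) (by linarith)
        calc w (t - s) * ‖u_a s - u_b s‖ ≤ (ε / (D + 1)) * D :=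
              mul_le_mul hw2.le hd (norm_nonneg _) hε'.le
          _ ≤ (ε / (D + 1)) * (D + 1) := by nlinarith
          _ = ε := div_mul_cancel₀ ε (by linarith)
      · have hu : ‖u_a s - u_b s‖ < ε := hT1 s (by linarith)
        calc w (t - s) * ‖u_a s - u_b s‖ ≤ 1 * ε :=
              mul_le_mul (hwb (t - s) (by linarith [hs.2])).2 hu.le (norm_nonneg _) zero_le_one
          _ = ε := one_mul ε
    constructor
    · exact le_limsup_of_frequently_le hnonneg.frequently hbdd
    · exact limsup_le_of_le hcobdd hupper
  have hgto : Tendsto g atTop (nhds 0) := by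
    rw [Metric.tendsto_atTop]
    intro ε hε
    obtain ⟨N, hN⟩ := (key (ε/2) (by linarith)).exists_forall_of_atTop
    refine ⟨N, fun t ht => ?_⟩
    have h2 := hN t ht
    rw [Real.dist_eq, sub_zero, abs_of_nonneg h2.1]
    linarith [h2.2]
  have hgto' : Tendsto g atTop (nhdsWithin 0 (Set.Ici 0)) :=
    tendsto_nhdsWithin_of_tendsto_nhds_of_eventually_within g hgto
      ((key 1 one_pos).mono fun t h => h.1)
  have hγ0 : Tendsto (fun t => γ (g t)) atTop (nhds 0) := by
    have hcw : ContinuousWithinAt γ (Set.Ici 0) 0 := hγ.1 0 Set.self_mem_Ici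
    have hc := hcw.tendsto.comp hgto'
    rwa [hγ.2.2.1] at hc
  have hβ0 : Tendsto (fun t => β ‖x0a - x0b‖ t) atTop (nhds 0) :=
    (hβ.2.2.1 ‖x0a - x0b‖ (norm_nonneg _)).2
  have hsum := hβ0.add hγ0
  rw [add_zero] at hsum
  exact squeeze_zero' (Eventually.of_forall fun t => norm_nonneg _)
    ((eventually_ge_atTop (0:ℝ)).mono fun t ht => hFM t ht) hsum
end

section
/- Let f : ℝ^n × ℝ^m → ℝ^n and g : ℝ^n → ℝ^p be continuous, let T > 0, and let u : [0,∞) → ℝ^m be measurable, essentially bounded, and T-periodic (u(t+T) = u(t) for all t ≥ 0). Call (x, v) admissible if v : [0,∞) → ℝ^m is measurable and essentially bounded and x : [0,∞) → ℝ^n is continuous with x(t) = x(0) + ∫_0^t f(x(s), v(s)) ds for all t ≥ 0. Assume: (i) there exist β of class KL, γ of class K∞ and a memory kernel w such that for all admissible (x_a, v_a), (x_b, v_b) and all t ≥ 0, ‖g(x_a(t)) − g(x_b(t))‖ ≤ β(‖x_a(0) − x_b(0)‖, t) + γ(esssup_{s∈[0,t]} w(t−s)‖v_a(s) − v_b(s)‖);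 (ii) every admissible pair (x, u) with the given input u has bounded state trajectory x. Then there exists a bounded function y_p : [0,∞) → ℝ^p with y_p(t+T) = y_p(t) for all t ≥ 0 such that for every admissible pair (x, u), ‖g(x(t)) − y_p(t)‖ → 0 as t → ∞. -/
open MeasureTheory Filter Set

lemma essSup_zero_fun (μ : Measure ℝ) : essSup (fun _ : ℝ => (0:ℝ)) μ = 0 := by
  rcases eq_or_ne μ 0 with h|h
  · subst h
    simp only [essSup, limsup, limsSup]
    have : {a : ℝ | ∀ᶠ (n:ℝ) in map (fun _ : ℝ => (0:ℝ)) (ae (0:Measure ℝ)), n ≤ a} = univ := by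
      ext a; simp [ae_zero]
    rw [this]
    exact Real.sInf_of_not_bddBelow (by simp [not_bddBelow_univ])
  · have : NeZero μ := ⟨h⟩; exact essSup_const _ (NeZero.ne _)


/-- `(x, v)` is an admissible state/input pair for the system `ẋ = f(x, v)`:
`v` is measurable and essentially bounded, and `x` is a continuous solution of
the associated integral equation on `[0,∞)`. -/
def Admissible {n m : ℕ}
    (f : EuclideanSpace ℝ (Fin n) → EuclideanSpace ℝ (Fin m) → EuclideanSpace ℝ (Fin n))
    (x : ℝ → EuclideanSpace ℝ (Fin n)) (v : ℝ → EuclideanSpace ℝ (Fin m)) : Prop :=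
  Measurable v ∧ (∃ C, ∀ᵐ t ∂volume, ‖v t‖ ≤ C) ∧
    ContinuousOn x (Set.Ici 0) ∧
    ∀ t ≥ (0:ℝ), x t = x 0 + ∫ s in (0:ℝ)..t, f (x s) (v s)

/-- entrainment by a periodic input. A fading-memory system with bounded
state trajectories driven by a `T`-periodic input has all outputs converging to a
common `T`-periodic trajectory, independently of the initial condition. -/
theorem stmt4 {n m p : ℕ}
    (f : EuclideanSpace ℝ (Fin n) → EuclideanSpace ℝ (Fin m) → EuclideanSpace ℝ (Fin n))
    (g : EuclideanSpace ℝ (Fin n) → EuclideanSpace ℝ (Fin p))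
    (hf : Continuous fun q : EuclideanSpace ℝ (Fin n) × EuclideanSpace ℝ (Fin m) => f q.1 q.2)
    (hg : Continuous g)
    (T : ℝ) (hT : 0 < T)
    (u : ℝ → EuclideanSpace ℝ (Fin m))
    (hum : Measurable u) (hub : ∃ C, ∀ᵐ t ∂volume, ‖u t‖ ≤ C)
    (huT : ∀ t ≥ (0:ℝ), u (t + T) = u t)
    (hFM : ∃ (β : ℝ → ℝ → ℝ) (γ : ℝ → ℝ) (w : ℝ → ℝ),
      ClassKL β ∧ ClassKInf γ ∧ MemoryKernel w ∧
      ∀ (x_a : ℝ → EuclideanSpace ℝ (Fin n)) (v_a : ℝ → EuclideanSpace ℝ (Fin m))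
        (x_b : ℝ → EuclideanSpace ℝ (Fin n)) (v_b : ℝ → EuclideanSpace ℝ (Fin m)),
        Admissible f x_a v_a → Admissible f x_b v_b →
        ∀ t ≥ (0:ℝ), ‖g (x_a t) - g (x_b t)‖ ≤ β ‖x_a 0 - x_b 0‖ t +
          γ (essSupOn (fun s => w (t - s) * ‖v_a s - v_b s‖) (Set.Icc 0 t)))
    (hBIBS : ∀ x : ℝ → EuclideanSpace ℝ (Fin n),
      Admissible f x u → ∃ C, ∀ t ≥ (0:ℝ), ‖x t‖ ≤ C) :
    ∃ y_p : ℝ → EuclideanSpace ℝ (Fin p),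
      (∃ C, ∀ t ≥ (0:ℝ), ‖y_p t‖ ≤ C) ∧
      (∀ t ≥ (0:ℝ), y_p (t + T) = y_p t) ∧
      ∀ x : ℝ → EuclideanSpace ℝ (Fin n), Admissible f x u →
        Tendsto (fun t => ‖g (x t) - y_p t‖) atTop (nhds 0) := by
  classical
  obtain ⟨β, γ, w, hKL, hKInf, hw, hFM'⟩ := hFM
  have hsame : ∀ xa xb, Admissible f xa u → Admissible f xb u →
      ∀ t ≥ (0:ℝ), ‖g (xa t) - g (xb t)‖ ≤ β ‖xa 0 - xb 0‖ t := by
    intro xa xb ha hb t ht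
    have h := hFM' xa u xb u ha hb t ht
    have hz : (fun s => w (t - s) * ‖u s - u s‖) = fun _ : ℝ => (0:ℝ) := by
      funext s; simp
    rw [hz] at h
    simp only [essSupOn] at h
    rw [essSup_zero_fun, hKInf.2.2.1] at h
    linarith
  by_cases hex : ∃ x₀, Admissible f x₀ u
  swap
  · exact ⟨fun _ => 0, ⟨0, fun t _ => by simp⟩, fun t _ => rfl,
      fun x hx => absurd ⟨x, hx⟩ hex⟩
  obtain ⟨x₀, hx₀⟩ := hex
  obtain ⟨C, hC⟩ := hBIBS x₀ hx₀
  have hC0 : 0 ≤ C := le_trans (norm_nonneg _) (hC 0 le_rfl)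
  obtain ⟨Cu, hCu⟩ := hub
  have uper : ∀ (k : ℕ) (s : ℝ), 0 ≤ s → u (s + k * T) = u s := by
    intro k
    induction k with
    | zero => intro s hs; simp
    | succ k ih =>
      intro s hs
      have h1 : s + ((k:ℕ)+1 : ℕ) * T = (s + k*T) + T := by push_cast; ring
      rw [h1, huT _ (add_nonneg hs (mul_nonneg (Nat.cast_nonneg k) hT.le)), ih s hs]
  -- integrability of the vector field along the trajectory
  have hFint : ∀ b : ℝ, 0 ≤ b → IntervalIntegrable (fun s => f (x₀ s) (u s)) volume 0 b := by
    intro b hb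
    set Cu' := max Cu 0 with hCu'
    have hK : IsCompact (x₀ '' (Icc 0 b)) :=
      isCompact_Icc.image_of_continuousOn (hx₀.2.2.1.mono (fun s hs => hs.1))
    have hK2 : IsCompact ((x₀ '' Icc 0 b) ×ˢ
        Metric.closedBall (0 : EuclideanSpace ℝ (Fin m)) Cu') :=
      hK.prod (isCompact_closedBall _ _)
    obtain ⟨M, hM⟩ := hK2.exists_bound_of_continuousOn hf.continuousOn
    rw [intervalIntegrable_iff_integrableOn_Ioc_of_le hb]
    have hxm : AEStronglyMeasurable x₀ (volume.restrict (Ioc 0 b)) :=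
      (hx₀.2.2.1.aestronglyMeasurable measurableSet_Ici).mono_measure
        (Measure.restrict_mono (fun s hs => hs.1.le) le_rfl)
    have hpm : AEStronglyMeasurable (fun s => (x₀ s, u s)) (volume.restrict (Ioc 0 b)) :=
      hxm.prodMk hum.aestronglyMeasurable
    have hFm : AEStronglyMeasurable (fun s => f (x₀ s) (u s)) (volume.restrict (Ioc 0 b)) :=
      hf.comp_aestronglyMeasurable hpm
    apply Integrable.mono' (integrableOn_const (C := M) measure_Ioc_lt_top.ne) hFm
    filter_upwards [ae_restrict_mem measurableSet_Ioc, ae_restrict_of_ae hCu] with s hs hus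
    exact hM (x₀ s, u s) ⟨mem_image_of_mem _ ⟨hs.1.le, hs.2⟩,
      mem_closedBall_zero_iff.2 (le_trans hus (le_max_left _ _))⟩
  -- shifted trajectories are admissible
  have hshift : ∀ k : ℕ, Admissible f (fun τ => x₀ (τ + k * T)) u := by
    intro k
    have hc0 : (0:ℝ) ≤ (k:ℝ)*T := mul_nonneg (Nat.cast_nonneg _) hT.le
    refine ⟨hx₀.1, ⟨Cu, hCu⟩, ?_, ?_⟩
    · exact hx₀.2.2.1.comp (continuous_add_right _).continuousOn
        (fun τ hτ => by simp only [mem_Ici] at *; linarith)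
    · intro t ht
      have e1 := hx₀.2.2.2 (t + (k:ℝ)*T) (by linarith)
      have e2 := hx₀.2.2.2 ((k:ℝ)*T) hc0
      have hii1 : IntervalIntegrable (fun s => f (x₀ s) (u s)) volume 0 ((k:ℝ)*T) :=
        hFint _ hc0
      have hii2 : IntervalIntegrable (fun s => f (x₀ s) (u s)) volume ((k:ℝ)*T) (t + (k:ℝ)*T) := by
        apply (hFint (t + (k:ℝ)*T) (by linarith)).mono_set
        rw [uIcc_of_le (by linarith : (k:ℝ)*T ≤ t + (k:ℝ)*T),
          uIcc_of_le (by linarith : (0:ℝ) ≤ t + (k:ℝ)*T)]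
        exact Icc_subset_Icc_left hc0
      have hadd := intervalIntegral.integral_add_adjacent_intervals hii1 hii2
      have hsub : ∫ s in (0:ℝ)..t, f (x₀ (s + (k:ℝ)*T)) (u s)
          = ∫ s in ((k:ℝ)*T)..(t + (k:ℝ)*T), f (x₀ s) (u s) := by
        have h1 : ∫ s in (0:ℝ)..t, f (x₀ (s + (k:ℝ)*T)) (u s)
            = ∫ s in (0:ℝ)..t, (fun σ => f (x₀ σ) (u σ)) (s + (k:ℝ)*T) := by
          apply intervalIntegral.integral_congr
          intro s hs
          rw [uIcc_of_le ht] at hs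
          simp only
          rw [uper k s hs.1]
        rw [h1, intervalIntegral.integral_comp_add_right (fun σ => f (x₀ σ) (u σ))]
        norm_num
      show x₀ (t + (k:ℝ)*T) = x₀ (0 + (k:ℝ)*T) + ∫ s in (0:ℝ)..t, f (x₀ (s + (k:ℝ)*T)) (u s)
      rw [hsub, zero_add, e1, e2, ← hadd]
      abel
  have h2C : (0:ℝ) ≤ 2*C := by linarith
  have hβmono : ∀ t, 0 ≤ t → ∀ r, 0 ≤ r → r ≤ 2*C → β r t ≤ β (2*C) t := by
    intro t ht r hr hle
    exact (hKL.2.1 t ht).1.monotoneOn (mem_Ici.2 hr) (mem_Ici.2 h2C) hle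
  have hkey : ∀ (j k : ℕ) (t : ℝ), 0 ≤ t →
      ‖g (x₀ (t + j*T)) - g (x₀ (t + k*T))‖ ≤ β (2*C) t := by
    intro j k t ht
    have h := hsame _ _ (hshift j) (hshift k) t ht
    have hj0 : (0:ℝ) ≤ 0 + (j:ℝ)*T := by
      rw [zero_add]; exact mul_nonneg (Nat.cast_nonneg _) hT.le
    have hk0 : (0:ℝ) ≤ 0 + (k:ℝ)*T := by
      rw [zero_add]; exact mul_nonneg (Nat.cast_nonneg _) hT.le
    have hr : ‖x₀ (0 + (j:ℝ)*T) - x₀ (0 + (k:ℝ)*T)‖ ≤ 2*C := by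
      calc ‖x₀ (0 + (j:ℝ)*T) - x₀ (0 + (k:ℝ)*T)‖
          ≤ ‖x₀ (0 + (j:ℝ)*T)‖ + ‖x₀ (0 + (k:ℝ)*T)‖ := norm_sub_le _ _
        _ ≤ C + C := add_le_add (hC _ hj0) (hC _ hk0)
        _ = 2*C := by ring
    exact le_trans h (hβmono t ht _ (norm_nonneg _) hr)
  have hβtend : ∀ r, 0 ≤ r → Tendsto (fun s => β r s) atTop (nhds 0) :=
    fun r hr => (hKL.2.2.1 r hr).2
  have hconv : ∀ t : ℝ, 0 ≤ t →
      ∃ a, Tendsto (fun k : ℕ => g (x₀ (t + k*T))) atTop (nhds a) := by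
    intro t ht
    apply cauchySeq_tendsto_of_complete
    apply cauchySeq_of_le_tendsto_0 (fun N : ℕ => β (2*C) (t + N*T))
    · intro n' m' N hn hm
      obtain ⟨i, rfl⟩ := Nat.exists_eq_add_of_le hn
      obtain ⟨j, rfl⟩ := Nat.exists_eq_add_of_le hm
      have e1 : t + ((N+i : ℕ):ℝ)*T = (t + N*T) + i*T := by push_cast; ring
      have e2 : t + ((N+j : ℕ):ℝ)*T = (t + N*T) + j*T := by push_cast; ring
      rw [dist_eq_norm, e1, e2]
      exact hkey i j (t + N*T)
        (add_nonneg ht (mul_nonneg (Nat.cast_nonneg _) hT.le))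
    · exact (hβtend _ h2C).comp
        (tendsto_atTop_add_const_left _ t (tendsto_natCast_atTop_atTop.atTop_mul_const hT))
  set yp : ℝ → EuclideanSpace ℝ (Fin p) :=
    fun t => limUnder atTop (fun k : ℕ => g (x₀ (t + k*T))) with hypdef
  have hyp : ∀ t, 0 ≤ t →
      Tendsto (fun k : ℕ => g (x₀ (t + k*T))) atTop (nhds (yp t)) := by
    intro t ht
    obtain ⟨a, ha⟩ := hconv t ht
    have : yp t = a := ha.limUnder_eq
    rw [this]; exact ha
  refine ⟨yp, ?_, ?_, ?_⟩
  · obtain ⟨Mg, hMg⟩ :=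
      (isCompact_closedBall (0 : EuclideanSpace ℝ (Fin n)) C).exists_bound_of_continuousOn
        hg.continuousOn
    refine ⟨Mg, fun t ht => ?_⟩
    apply le_of_tendsto (hyp t ht).norm
    filter_upwards with k
    exact hMg _ (mem_closedBall_zero_iff.2
      (hC _ (add_nonneg ht (mul_nonneg (Nat.cast_nonneg _) hT.le))))
  · intro t ht
    have h1 := hyp (t+T) (by linarith)
    have h2 : Tendsto (fun k : ℕ => g (x₀ (t + T + k*T))) atTop (nhds (yp t)) := by
      have h3 := (hyp t ht).comp (tendsto_add_atTop_nat 1)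
      have heq : (fun k : ℕ => g (x₀ (t + T + k*T)))
          = (fun k : ℕ => g (x₀ (t + k*T))) ∘ (fun k => k + 1) := by
        funext k
        simp only [Function.comp_apply]
        congr 1
        congr 1
        push_cast; ring
      rw [heq]; exact h3
    exact tendsto_nhds_unique h1 h2
  · intro x hx
    have hbound : ∀ t, 0 ≤ t →
        ‖g (x t) - yp t‖ ≤ β ‖x 0 - x₀ 0‖ t + β (2*C) t := by
      intro t ht
      have h1 : ‖g (x₀ t) - yp t‖ ≤ β (2*C) t := by
        apply le_of_tendsto ((hyp t ht).const_sub (g (x₀ t))).norm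
        filter_upwards with k
        have := hkey 0 k t ht
        simpa using this
      have h2 := hsame x x₀ hx hx₀ t ht
      have h3 := dist_triangle (g (x t)) (g (x₀ t)) (yp t)
      simp only [dist_eq_norm] at h3
      linarith
    apply squeeze_zero' (eventually_atTop.2 ⟨0, fun t _ => norm_nonneg _⟩)
      (eventually_atTop.2 ⟨0, fun t ht => hbound t ht⟩)
    have := (hβtend _ (norm_nonneg (x 0 - x₀ 0))).add (hβtend _ h2C)
    simpa using this
end

section
/- Let w be a memory kernel with w(s) > 0 for all s ≥ 0, β of class KL, γ of class K∞ (so γ is a bijection of [0,∞) with inverse γ⁻¹), and t* > 0, r > 0. Let u_a, u_b : [0,∞) → ℝ^m be measurable and essentially bounded with ‖u_a(t) − u_b(t)‖ ≤ γ⁻¹(r)/w(t*−t) for a.e. t ∈ [0,t*] and ‖u_a(t) − u_b(t)‖ ≤ γ⁻¹(r) for a.e. t > t*. Let x_{0,a}, x_{0,b} ∈ ℝ^n and y_a, y_b : [0,∞) → ℝ^p satisfy, for all t ≥ 0, ‖y_a(t) − y_b(t)‖ ≤ β(‖x_{0,a} − x_{0,b}‖, t) + γ(esssup_{s∈[0,t]}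 w(t−s)‖u_a(s) − u_b(s)‖). Then for all t ≥ t*: ‖y_a(t) − y_b(t)‖ ≤ β(‖x_{0,a} − x_{0,b}‖, t) + r. -/
open MeasureTheory Filter Set

/-- explicit time-varying input constraints guaranteeing a prescribed output
mismatch at a given time horizon `t*`, for a system satisfying the fading-memory
inequality.  Here `r'` plays the role of `γ⁻¹(r)`: it is the (unique) nonnegative real
with `γ r' = r`. -/
theorem stmt5 {m n p : ℕ}
    (w : ℝ → ℝ) (hw : MemoryKernel w) (hwpos : ∀ s ≥ (0:ℝ), 0 < w s)
    (β : ℝ → ℝ → ℝ) (hβ : ClassKL β)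
    (γ : ℝ → ℝ) (hγ : ClassKInf γ)
    (tstar r : ℝ) (htstar : 0 < tstar) (hr : 0 < r)
    (r' : ℝ) (hr' : 0 ≤ r') (hγr' : γ r' = r)
    (u_a u_b : ℝ → EuclideanSpace ℝ (Fin m))
    (hua : Measurable u_a) (hub : Measurable u_b)
    (hba : ∃ C, ∀ᵐ s ∂volume, ‖u_a s‖ ≤ C)
    (hbb : ∃ C, ∀ᵐ s ∂volume, ‖u_b s‖ ≤ C)
    (hu₁ : ∀ᵐ t ∂volume, t ∈ Set.Icc 0 tstar →
      ‖u_a t - u_b t‖ ≤ r' / w (tstar - t))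
    (hu₂ : ∀ᵐ t ∂volume, tstar < t → ‖u_a t - u_b t‖ ≤ r')
    (x0a x0b : EuclideanSpace ℝ (Fin n))
    (y_a y_b : ℝ → EuclideanSpace ℝ (Fin p))
    (hFM : ∀ t ≥ (0:ℝ), ‖y_a t - y_b t‖ ≤ β ‖x0a - x0b‖ t +
      γ (essSupOn (fun s => w (t - s) * ‖u_a s - u_b s‖) (Set.Icc 0 t))) :
    ∀ t ≥ tstar, ‖y_a t - y_b t‖ ≤ β ‖x0a - x0b‖ t + r := by
  intro t ht
  have ht0 : (0:ℝ) ≤ t := le_trans htstar.le ht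
  set f : ℝ → ℝ := fun s => w (t - s) * ‖u_a s - u_b s‖ with hf
  set μ := volume.restrict (Set.Icc (0:ℝ) t) with hμ
  have hμne : μ ≠ 0 := by
    intro h
    have : μ Set.univ = 0 := by rw [h]; simp
    rw [hμ, Measure.restrict_apply_univ, Real.volume_Icc] at this
    simp only [sub_zero] at this
    have := ENNReal.ofReal_eq_zero.mp this
    linarith [lt_of_lt_of_le htstar ht]
  haveI : (ae μ).NeBot := MeasureTheory.ae_neBot.mpr hμne
  have hub' : ∀ᵐ s ∂μ, f s ≤ r' := by
    rw [hμ, ae_restrict_iff' measurableSet_Icc]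
    filter_upwards [hu₁, hu₂] with s h1 h2 hs
    obtain ⟨hs0, hst⟩ := hs
    have hwts : 0 ≤ w (t - s) := (hw.2.2.1 (t - s) (by linarith)).1
    by_cases hcase : s ≤ tstar
    · have hΔ := h1 ⟨hs0, hcase⟩
      have hwpos' : 0 < w (tstar - s) := hwpos (tstar - s) (by linarith)
      have hmono : w (t - s) ≤ w (tstar - s) :=
        hw.2.1 (Set.mem_Ici.mpr (by linarith)) (Set.mem_Ici.mpr (by linarith)) (by linarith)
      calc w (t - s) * ‖u_a s - u_b s‖ ≤ w (t - s) * (r' / w (tstar - s)) :=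
            mul_le_mul_of_nonneg_left hΔ hwts
        _ ≤ w (tstar - s) * (r' / w (tstar - s)) :=
            mul_le_mul_of_nonneg_right hmono (div_nonneg hr' hwpos'.le)
        _ = r' := by field_simp
    · have hΔ := h2 (lt_of_not_ge hcase)
      have hw1 : w (t - s) ≤ 1 := (hw.2.2.1 (t - s) (by linarith)).2
      calc w (t - s) * ‖u_a s - u_b s‖ ≤ 1 * r' :=
            mul_le_mul hw1 hΔ (norm_nonneg _) zero_le_one
        _ = r' := one_mul r'
  have hnn : ∀ᵐ s ∂μ, 0 ≤ f s := by
    rw [hμ, ae_restrict_iff' measurableSet_Icc]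
    filter_upwards with s hs
    exact mul_nonneg (hw.2.2.1 (t - s) (by linarith [hs.2])).1 (norm_nonneg _)
  have hE_le : essSupOn f (Set.Icc 0 t) ≤ r' := by
    apply Filter.limsup_le_of_le
    · exact Filter.IsCoboundedUnder.of_frequently_ge hnn.frequently
    · exact hub'
  have hE_nn : 0 ≤ essSupOn f (Set.Icc 0 t) := by
    exact Filter.le_limsup_of_frequently_le hnn.frequently
      (Filter.isBoundedUnder_of_eventually_le hub')
  have hγE : γ (essSupOn f (Set.Icc 0 t)) ≤ r := by
    rw [← hγr']
    rcases eq_or_lt_of_le hE_le with h | h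
    · rw [h]
    · exact le_of_lt (hγ.2.1 (Set.mem_Ici.mpr hE_nn) (Set.mem_Ici.mpr hr') h)
  calc ‖y_a t - y_b t‖ ≤ β ‖x0a - x0b‖ t + γ (essSupOn f (Set.Icc 0 t)) := hFM t ht0
    _ ≤ β ‖x0a - x0b‖ t + r := by linarith
end

section
/- Let m ≥ 1, M, K > 0, and let w be a memory kernel. Let K_{M,K} be the set of functions u : (−∞,0] → ℝ^m such that ‖u(s)‖ ≤ M for all s ≤ 0 and ‖u(s) − u(s')‖ ≤ K|s − s'| for all s, s' ≤ 0. Then K_{M,K} is sequentially compact for the w-fading distance: every sequence (u_k) in K_{M,K} admits a subsequence (u_{k_j}) and a function u ∈ K_{M,K} such that sup_{s≤0} w(−s)‖u_{k_j}(s) − u(s)‖ → 0 as j → ∞. -/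
open Filter Set

set_option maxHeartbeats 1000000 in
/-- the set of `M`-bounded, `K`-Lipschitz past inputs `(−∞,0] → ℝ^m`
is sequentially compact for the `w`-fading distance
`d_w(u,v) = sup_{s ≤ 0} w(−s)‖u(s) − v(s)‖`. -/
theorem stmt8 (m : ℕ) (hm : 1 ≤ m) (M K : ℝ) (hM : 0 < M) (hK : 0 < K)
    (w : ℝ → ℝ) (hw : MemoryKernel w)
    (u : ℕ → ℝ → EuclideanSpace ℝ (Fin m))
    (hb : ∀ k, ∀ s ≤ (0:ℝ), ‖u k s‖ ≤ M)
    (hlip : ∀ k, ∀ s ≤ (0:ℝ), ∀ s' ≤ (0:ℝ), ‖u k s - u k s'‖ ≤ K * |s - s'|) :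
    ∃ φ : ℕ → ℕ, StrictMono φ ∧
      ∃ v : ℝ → EuclideanSpace ℝ (Fin m),
        (∀ s ≤ (0:ℝ), ‖v s‖ ≤ M) ∧
        (∀ s ≤ (0:ℝ), ∀ s' ≤ (0:ℝ), ‖v s - v s'‖ ≤ K * |s - s'|) ∧
        Tendsto (fun j => ⨆ s : Set.Iic (0:ℝ), w (-(s:ℝ)) * ‖u (φ j) s - v s‖)
          atTop (nhds 0) := by
  classical
  obtain ⟨hwc, hwa, hw01, hwlim⟩ := hw
  -- Step 1: extract a subsequence converging pointwise on rationals ≤ 0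
  have hcomp : IsCompact (Set.pi (Set.univ : Set {q : ℚ // (q:ℝ) ≤ 0})
      fun _ => Metric.closedBall (0 : EuclideanSpace ℝ (Fin m)) M) :=
    isCompact_univ_pi fun _ => isCompact_closedBall _ _
  have hmem : ∀ k, (fun q : {q : ℚ // (q:ℝ) ≤ 0} => u k (q:ℝ)) ∈
      Set.pi Set.univ fun _ => Metric.closedBall (0 : EuclideanSpace ℝ (Fin m)) M := by
    intro k q _
    simpa [Metric.mem_closedBall, dist_eq_norm] using hb k q q.2
  obtain ⟨L, -, φ, hφ, hL⟩ := hcomp.tendsto_subseq hmem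
  refine ⟨φ, hφ, ?_⟩
  have hq : ∀ q : {q : ℚ // (q:ℝ) ≤ 0},
      Tendsto (fun j => u (φ j) (q:ℝ)) atTop (nhds (L q)) := fun q =>
    (tendsto_pi_nhds.mp hL) q
  -- Step 2: pointwise convergence at every real s ≤ 0
  have hconv : ∀ s : ℝ, s ≤ 0 → ∃ a, Tendsto (fun j => u (φ j) s) atTop (nhds a) := by
    intro s hs
    have hcauchy : CauchySeq (fun j => u (φ j) s) := by
      rw [Metric.cauchySeq_iff]
      intro ε hε
      have hδ : (0:ℝ) < ε / (4 * K) := by positivity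
      obtain ⟨q, hq1, hq2⟩ := exists_rat_btwn (show s - ε / (4 * K) < s by linarith)
      have hqle : (q:ℝ) ≤ 0 := le_of_lt (lt_of_lt_of_le hq2 hs)
      have hqc : CauchySeq (fun j => u (φ j) (q:ℝ)) := (hq ⟨q, hqle⟩).cauchySeq
      rw [Metric.cauchySeq_iff] at hqc
      obtain ⟨N, hN⟩ := hqc (ε / 2) (by linarith)
      refine ⟨N, fun p hp p' hp' => ?_⟩
      have h1 : ‖u (φ p) s - u (φ p) (q:ℝ)‖ ≤ K * |s - (q:ℝ)| := hlip _ s hs _ hqle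
      have h2 : ‖u (φ p') (q:ℝ) - u (φ p') s‖ ≤ K * |(q:ℝ) - s| := hlip _ _ hqle s hs
      have habs : |s - (q:ℝ)| ≤ ε / (4 * K) := by
        rw [abs_of_nonneg (by linarith)]; linarith
      have habs' : |(q:ℝ) - s| ≤ ε / (4 * K) := by
        rw [abs_sub_comm]; exact habs
      have hKd : K * (ε / (4 * K)) = ε / 4 := by field_simp
      calc dist (u (φ p) s) (u (φ p') s)
          ≤ dist (u (φ p) s) (u (φ p) (q:ℝ)) + dist (u (φ p) (q:ℝ)) (u (φ p') (q:ℝ))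
            + dist (u (φ p') (q:ℝ)) (u (φ p') s) := dist_triangle4 _ _ _ _
        _ < ε / 4 + ε / 2 + ε / 4 := by
            have e1 : dist (u (φ p) s) (u (φ p) (q:ℝ)) ≤ ε / 4 := by
              rw [dist_eq_norm]
              calc ‖u (φ p) s - u (φ p) (q:ℝ)‖ ≤ K * |s - (q:ℝ)| := h1
                _ ≤ K * (ε / (4 * K)) := by
                    exact mul_le_mul_of_nonneg_left habs (le_of_lt hK)
                _ = ε / 4 := hKd
            have e2 : dist (u (φ p') (q:ℝ)) (u (φ p') s) ≤ ε / 4 := by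
              rw [dist_eq_norm]
              calc ‖u (φ p') (q:ℝ) - u (φ p') s‖ ≤ K * |(q:ℝ) - s| := h2
                _ ≤ K * (ε / (4 * K)) := by
                    exact mul_le_mul_of_nonneg_left habs' (le_of_lt hK)
                _ = ε / 4 := hKd
            have e3 := hN p hp p' hp'
            linarith
        _ = ε := by ring
    exact cauchySeq_tendsto_of_complete hcauchy
  -- define the limit function
  set v : ℝ → EuclideanSpace ℝ (Fin m) :=
    fun s => limUnder atTop (fun j => u (φ j) (min s 0)) with hv_def
  have hv : ∀ s : ℝ, s ≤ 0 → Tendsto (fun j => u (φ j) s) atTop (nhds (v s)) := by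
    intro s hs
    obtain ⟨a, ha⟩ := hconv s hs
    have : v s = a := by
      rw [hv_def]; simp only [min_eq_left hs]; exact ha.limUnder_eq
    rw [this]; exact ha
  -- bounds on v
  have hvb : ∀ s ≤ (0:ℝ), ‖v s‖ ≤ M := fun s hs =>
    le_of_tendsto (hv s hs).norm (Filter.Eventually.of_forall fun j => hb _ s hs)
  have hvlip : ∀ s ≤ (0:ℝ), ∀ s' ≤ (0:ℝ), ‖v s - v s'‖ ≤ K * |s - s'| := fun s hs s' hs' =>
    le_of_tendsto ((hv s hs).sub (hv s' hs')).norm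
      (Filter.Eventually.of_forall fun j => hlip _ s hs s' hs')
  refine ⟨v, hvb, hvlip, ?_⟩
  haveI : Nonempty (Set.Iic (0:ℝ)) := ⟨⟨0, Set.mem_Iic.mpr (le_refl 0)⟩⟩
  -- boundedness of the sup terms
  have hterm : ∀ j, ∀ s : Set.Iic (0:ℝ),
      w (-(s:ℝ)) * ‖u (φ j) s - v s‖ ≤ 2 * M := by
    intro j s
    have hs : (s:ℝ) ≤ 0 := s.2
    have hns : (0:ℝ) ≤ -(s:ℝ) := by linarith
    have hw1 := hw01 (-(s:ℝ)) hns
    have hnorm : ‖u (φ j) (s:ℝ) - v s‖ ≤ 2 * M := by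
      calc ‖u (φ j) (s:ℝ) - v s‖ ≤ ‖u (φ j) (s:ℝ)‖ + ‖v (s:ℝ)‖ := norm_sub_le _ _
        _ ≤ M + M := add_le_add (hb _ _ hs) (hvb _ hs)
        _ = 2 * M := by ring
    calc w (-(s:ℝ)) * ‖u (φ j) (s:ℝ) - v s‖ ≤ 1 * (2 * M) :=
          mul_le_mul hw1.2 hnorm (norm_nonneg _) zero_le_one
      _ = 2 * M := one_mul _
  have hbdd : ∀ j, BddAbove (Set.range fun s : Set.Iic (0:ℝ) =>
      w (-(s:ℝ)) * ‖u (φ j) s - v s‖) := by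
    intro j
    exact ⟨2 * M, by rintro x ⟨s, rfl⟩; exact hterm j s⟩
  -- key uniform estimate
  have key : ∀ ε > (0:ℝ), ∀ᶠ j in atTop, ∀ s : ℝ, s ≤ 0 →
      w (-s) * ‖u (φ j) s - v s‖ ≤ ε := by
    intro ε hε
    have hε' : (0:ℝ) < ε / (2 * M + 1) := by positivity
    have hwev : ∀ᶠ t in atTop, w t < ε / (2 * M + 1) :=
      hwlim.eventually_lt_const hε'
    obtain ⟨T₀, hT₀⟩ := eventually_atTop.mp hwev
    set T : ℝ := max T₀ 0 with hT_def
    have hT0 : (0:ℝ) ≤ T := le_max_right _ _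
    have hwT : w T < ε / (2 * M + 1) := hT₀ T (le_max_left _ _)
    -- grid
    have hδ : (0:ℝ) < ε / (4 * K) := by positivity
    set δ : ℝ := ε / (4 * K) with hδ_def
    obtain ⟨n, hn⟩ := exists_nat_ge (T / δ)
    have hev : ∀ᶠ j in atTop, ∀ i ∈ Finset.range (n + 1),
        ‖u (φ j) (-(i:ℝ) * δ) - v (-(i:ℝ) * δ)‖ ≤ ε / 4 := by
      rw [eventually_all_finset]
      intro i _
      have hgi : -(i:ℝ) * δ ≤ 0 := by
        have : (0:ℝ) ≤ (i:ℝ) * δ := mul_nonneg (Nat.cast_nonneg _) (le_of_lt hδ)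
        linarith
      have h0 : Tendsto (fun j => ‖u (φ j) (-(i:ℝ) * δ) - v (-(i:ℝ) * δ)‖)
          atTop (nhds 0) := by
        have h1 : Tendsto (fun j => ‖u (φ j) (-(i:ℝ) * δ) - v (-(i:ℝ) * δ)‖)
            atTop (nhds ‖v (-(i:ℝ) * δ) - v (-(i:ℝ) * δ)‖) :=
          ((hv _ hgi).sub tendsto_const_nhds).norm
        rwa [sub_self, norm_zero] at h1
      exact (h0.eventually_lt_const (by positivity : (0:ℝ) < ε / 4)).mono
        fun j hj => le_of_lt hj
    filter_upwards [hev] with j hj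
    intro s hs
    have hns : (0:ℝ) ≤ -s := by linarith
    have hw1 := hw01 (-s) hns
    rcases le_or_gt s (-T) with hcase | hcase
    · -- tail
      have hwle : w (-s) ≤ w T := hwa (by exact hT0) (by simpa using hns) (by linarith)
      have hnorm : ‖u (φ j) s - v s‖ ≤ 2 * M := by
        calc ‖u (φ j) s - v s‖ ≤ ‖u (φ j) s‖ + ‖v s‖ := norm_sub_le _ _
          _ ≤ M + M := add_le_add (hb _ _ hs) (hvb _ hs)
          _ = 2 * M := by ring
      calc w (-s) * ‖u (φ j) s - v s‖ ≤ (ε / (2 * M + 1)) * (2 * M) :=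
            mul_le_mul (le_of_lt (lt_of_le_of_lt hwle hwT)) hnorm (norm_nonneg _)
              (le_of_lt hε')
        _ ≤ ε := by
            rw [div_mul_eq_mul_div, div_le_iff₀ (by linarith)]
            nlinarith
    · -- interior: -T < s ≤ 0
      set i : ℕ := (⌊(-s) / δ⌋).toNat with hi_def
      have hds : (0:ℝ) ≤ (-s) / δ := div_nonneg hns (le_of_lt hδ)
      have hfl : ((⌊(-s) / δ⌋ : ℤ) : ℝ) = (i:ℝ) := by
        rw [hi_def]
        norm_cast
        exact (Int.toNat_of_nonneg (Int.floor_nonneg.mpr hds)).symm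
      have hile : (i:ℝ) ≤ (-s) / δ := by
        have h := Int.floor_le ((-s) / δ); rwa [hfl] at h
      have hilt : (-s) / δ < (i:ℝ) + 1 := by
        have h := Int.lt_floor_add_one ((-s) / δ); rwa [hfl] at h
      have hin : i ≤ n := by
        have h1 : (-s) / δ ≤ T / δ := by gcongr; linarith
        have h2 : (i:ℝ) ≤ (n:ℝ) := le_trans hile (le_trans h1 hn)
        exact_mod_cast h2
      set g : ℝ := -(i:ℝ) * δ with hg_def
      have hg0 : g ≤ 0 := by
        have : (0:ℝ) ≤ (i:ℝ) * δ := mul_nonneg (Nat.cast_nonneg _) (le_of_lt hδ)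
        rw [hg_def]; linarith
      have hiδ : (i:ℝ) * δ ≤ -s := (le_div_iff₀ hδ).mp hile
      have hiδ' : -s < ((i:ℝ) + 1) * δ := (div_lt_iff₀ hδ).mp hilt
      have habs : |s - g| ≤ δ := by
        rw [hg_def, abs_le]
        constructor <;> nlinarith
      have habs' : |g - s| ≤ δ := by rw [abs_sub_comm]; exact habs
      have hgrid : ‖u (φ j) g - v g‖ ≤ ε / 4 :=
        hj i (Finset.mem_range.mpr (Nat.lt_succ_of_le hin))
      have hKd : K * δ = ε / 4 := by rw [hδ_def]; field_simp
      have tri : ‖u (φ j) s - v s‖ ≤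
          ‖u (φ j) s - u (φ j) g‖ + ‖u (φ j) g - v g‖ + ‖v g - v s‖ := by
        have := dist_triangle4 (u (φ j) s) (u (φ j) g) (v g) (v s)
        simpa [dist_eq_norm] using this
      have hA : ‖u (φ j) s - u (φ j) g‖ ≤ ε / 4 := by
        calc ‖u (φ j) s - u (φ j) g‖ ≤ K * |s - g| := hlip _ s hs g hg0
          _ ≤ K * δ := mul_le_mul_of_nonneg_left habs (le_of_lt hK)
          _ = ε / 4 := hKd
      have hC : ‖v g - v s‖ ≤ ε / 4 := by
        calc ‖v g - v s‖ ≤ K * |g - s| := hvlip g hg0 s hs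
          _ ≤ K * δ := mul_le_mul_of_nonneg_left habs' (le_of_lt hK)
          _ = ε / 4 := hKd
      have hnorm : ‖u (φ j) s - v s‖ ≤ ε := by
        have := tri
        linarith
      calc w (-s) * ‖u (φ j) s - v s‖ ≤ 1 * ε :=
            mul_le_mul hw1.2 hnorm (norm_nonneg _) zero_le_one
        _ = ε := one_mul _
  -- conclude
  rw [Metric.tendsto_atTop]
  intro ε hε
  obtain ⟨N, hN⟩ := eventually_atTop.mp (key (ε / 2) (by linarith))
  refine ⟨N, fun j hjN => ?_⟩
  have hS_le : (⨆ s : Set.Iic (0:ℝ), w (-(s:ℝ)) * ‖u (φ j) s - v s‖) ≤ ε / 2 :=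
    ciSup_le fun s => hN j hjN s s.2
  have hS_ge : (0:ℝ) ≤ ⨆ s : Set.Iic (0:ℝ), w (-(s:ℝ)) * ‖u (φ j) s - v s‖ := by
    refine le_trans ?_ (le_ciSup (hbdd j) (⟨0, Set.mem_Iic.mpr (le_refl 0)⟩ : Set.Iic (0:ℝ)))
    exact mul_nonneg (hw01 _ (by norm_num)).1 (norm_nonneg _)
  rw [Real.dist_eq, sub_zero, abs_of_nonneg hS_ge]
  linarith
end

section
/- Let m, p ≥ 1, M, K > 0, let w be a memory kernel, and let K_{M,K} be the set of functions u : (−∞,0] → ℝ^m with ‖u(s)‖ ≤ M for all s ≤ 0 and ‖u(s) − u(s')‖ ≤ K|s − s'| for all s, s' ≤ 0, equipped with the w-fading distance d_w(u,v) = sup_{s≤0} w(−s)‖u(s) − v(s)‖. Then a map F : K_{M,K} → ℝ^p is continuous with respect to d_w (for every u ∈ K_{M,K} and ε > 0 there is δ > 0 such that d_w(u,v) < δ implies ‖F(u) − F(v)‖ < ε for all v ∈ K_{M,K}) if and only if there exists γ of class K∞ such that ‖F(u) − F(v)‖ ≤ γ(d_w(u,v)) for all u, v ∈ K_{M,K}.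 In other words, for bounded Lipschitz-equicontinuous inputs, fading memory and uniform fading memory coincide. -/
open Filter Set
open Topology intervalIntegral

/-- The `w`-fading distance between two past inputs `(−∞,0] → ℝ^m`. -/
noncomputable def fadingDist {m : ℕ} (w : ℝ → ℝ)
    (u v : ℝ → EuclideanSpace ℝ (Fin m)) : ℝ :=
  ⨆ s : Set.Iic (0:ℝ), w (-(s:ℝ)) * ‖u s - v s‖

/-- The set of past inputs `(−∞,0] → ℝ^m` bounded by `M` and `K`-Lipschitz. -/
def KMK (m : ℕ) (M K : ℝ) : Set (ℝ → EuclideanSpace ℝ (Fin m)) :=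
  {u | (∀ s ≤ (0:ℝ), ‖u s‖ ≤ M) ∧
    ∀ s ≤ (0:ℝ), ∀ s' ≤ (0:ℝ), ‖u s - u s'‖ ≤ K * |s - s'|}

lemma exists_classKInf_ge (ω : ℝ → ℝ) (hmono : Monotone ω) (hnn : ∀ r, 0 ≤ ω r)
    (h0 : ω 0 = 0)
    (hcont : ∀ ε > (0:ℝ), ∃ δ > (0:ℝ), ∀ r, 0 ≤ r → r < δ → ω r ≤ ε) :
    ∃ γ : ℝ → ℝ, ClassKInf γ ∧ ∀ r, 0 ≤ r → ω r ≤ γ r := by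
  have hint : ∀ a b : ℝ, IntervalIntegrable ω MeasureTheory.volume a b :=
    fun a b => hmono.intervalIntegrable
  set I : ℝ → ℝ := fun r => if r ≤ 0 then 0 else r⁻¹ * ∫ t in r..(2*r), ω t with hI
  have hIval : ∀ r : ℝ, 0 < r → I r = r⁻¹ * ∫ t in r..(2*r), ω t := by
    intro r hr; simp only [hI, if_neg (not_le.2 hr)]
  have hInn : ∀ r, 0 ≤ I r := by
    intro r
    by_cases hr : r ≤ 0
    · simp [hI, hr]
    · push_neg at hr
      rw [hIval r hr]
      apply mul_nonneg (inv_nonneg.2 hr.le)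
      apply intervalIntegral.integral_nonneg (by linarith)
      intro t _; exact hnn t
  -- lower bound : ω r ≤ I r for r > 0
  have hIlb : ∀ r : ℝ, 0 < r → ω r ≤ I r := by
    intro r hr
    rw [hIval r hr]
    have h1 : (r : ℝ) * ω r ≤ ∫ t in r..(2*r), ω t := by
      have := intervalIntegral.integral_mono_on (μ := MeasureTheory.volume)
        (f := fun _ => ω r) (g := ω) (by linarith : r ≤ 2*r)
        (intervalIntegrable_const) (hint r (2*r))
        (fun x hx => hmono hx.1)
      rw [intervalIntegral.integral_const] at this
      simpa [smul_eq_mul, show 2*r - r = r by ring] using this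
    calc ω r = r⁻¹ * (r * ω r) := by field_simp
    _ ≤ r⁻¹ * ∫ t in r..(2*r), ω t :=
        mul_le_mul_of_nonneg_left h1 (inv_nonneg.2 hr.le)
  -- upper bound : I r ≤ ω (2r) for r > 0
  have hIub : ∀ r : ℝ, 0 < r → I r ≤ ω (2*r) := by
    intro r hr
    rw [hIval r hr]
    have h1 : (∫ t in r..(2*r), ω t) ≤ r * ω (2*r) := by
      have := intervalIntegral.integral_mono_on (μ := MeasureTheory.volume)
        (f := ω) (g := fun _ => ω (2*r)) (by linarith : r ≤ 2*r)
        (hint r (2*r)) (intervalIntegrable_const)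
        (fun x hx => hmono hx.2)
      rw [intervalIntegral.integral_const] at this
      simpa [smul_eq_mul, show 2*r - r = r by ring] using this
    calc r⁻¹ * ∫ t in r..(2*r), ω t ≤ r⁻¹ * (r * ω (2*r)) :=
        mul_le_mul_of_nonneg_left h1 (inv_nonneg.2 hr.le)
    _ = ω (2*r) := by field_simp
  -- I as scaled integral
  have hIalt : ∀ r : ℝ, 0 < r → I r = ∫ s in (1:ℝ)..2, ω (r * s) := by
    intro r hr
    rw [intervalIntegral.integral_comp_mul_left (fun t => ω t) hr.ne',
      hIval r hr]
    rw [smul_eq_mul, mul_one, mul_comm r 2]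
  -- monotone on Ici 0
  have hImono : MonotoneOn I (Set.Ici 0) := by
    rintro a (ha : (0:ℝ) ≤ a) b (hb : (0:ℝ) ≤ b) hab
    rcases eq_or_lt_of_le ha with h|h
    · rw [← h]; simp only [hI, if_pos le_rfl]; exact hInn b
    · have hb' : 0 < b := lt_of_lt_of_le h hab
      rw [hIalt a h, hIalt b hb']
      apply intervalIntegral.integral_mono_on (by norm_num)
      · exact ((hmono.comp_monotoneOn (fun x _ y _ hxy =>
          mul_le_mul_of_nonneg_left hxy h.le)).intervalIntegrable)
      · exact ((hmono.comp_monotoneOn (fun x _ y _ hxy =>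
          mul_le_mul_of_nonneg_left hxy hb'.le)).intervalIntegrable)
      · intro x hx
        exact hmono (mul_le_mul_of_nonneg_right hab (by linarith [hx.1]))
  -- continuity of I on Ioi 0
  have hG : Continuous (fun x => ∫ t in (0:ℝ)..x, ω t) :=
    intervalIntegral.continuous_primitive hint 0
  have hIcont : ∀ x : ℝ, 0 < x → ContinuousAt I x := by
    intro x hx
    have heq : ∀ᶠ r in nhds x, I r = r⁻¹ * ((∫ t in (0:ℝ)..(2*r), ω t) - ∫ t in (0:ℝ)..r, ω t) := by
      filter_upwards [eventually_gt_nhds hx] with r hr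
      rw [hIval r hr]
      congr 1
      have := intervalIntegral.integral_add_adjacent_intervals (hint 0 r) (hint r (2*r))
      linarith
    have hg : ContinuousAt (fun r : ℝ => r⁻¹ * ((∫ t in (0:ℝ)..(2*r), ω t) - ∫ t in (0:ℝ)..r, ω t)) x := by
      apply ContinuousAt.mul
      · exact continuousAt_inv₀ hx.ne'
      · exact ((hG.comp (continuous_const.mul continuous_id)).continuousAt).sub hG.continuousAt
    exact hg.congr (Filter.EventuallyEq.symm heq)
  -- continuity of I at 0 within Ici 0
  have hI0 : Tendsto I (nhdsWithin 0 (Set.Ici 0)) (nhds 0) := by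
    rw [Metric.tendsto_nhdsWithin_nhds]
    intro ε hε
    obtain ⟨δ, hδ, hδω⟩ := hcont (ε/2) (by linarith)
    refine ⟨δ/2, by linarith, ?_⟩
    intro x hx hxd
    rw [Real.dist_eq, sub_zero] at hxd ⊢
    have hx0 : (0:ℝ) ≤ x := hx
    rw [abs_of_nonneg hx0] at hxd
    rw [abs_of_nonneg (hInn x)]
    rcases eq_or_lt_of_le hx0 with h|h
    · rw [← h]; simp only [hI, if_pos le_rfl]; linarith
    · have := hIub x h
      have h2 : ω (2*x) ≤ ε/2 := hδω (2*x) (by linarith) (by linarith)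
      linarith
  set γ : ℝ → ℝ := fun r => 2*r + I r with hγ
  have hγ0 : γ 0 = 0 := by simp [hγ, hI]
  refine ⟨γ, ⟨?_, ?_, hγ0, ?_, ?_⟩, ?_⟩
  · -- ContinuousOn
    intro x hx
    rcases eq_or_lt_of_le (Set.mem_Ici.mp hx) with h|h
    · rw [← h]
      have : Tendsto γ (nhdsWithin 0 (Set.Ici 0)) (nhds 0) := by
        have h2 : Tendsto (fun r : ℝ => 2*r) (nhdsWithin 0 (Set.Ici 0)) (nhds 0) := by
          have : Continuous (fun r : ℝ => 2*r) := continuous_const.mul continuous_id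
          simpa using (this.tendsto 0).mono_left nhdsWithin_le_nhds
        simpa using h2.add hI0
      rw [ContinuousWithinAt, hγ0]
      exact this
    · apply ContinuousAt.continuousWithinAt
      exact ((continuous_const.mul continuous_id).continuousAt).add (hIcont x h)
  · -- StrictMonoOn
    intro a ha b hb hab
    have := hImono ha hb hab.le
    simp only [hγ]
    have : (2:ℝ)*a < 2*b := by linarith
    have := hImono ha hb hab.le
    linarith
  · -- nonneg
    intro r hr
    have := hInn r
    simp only [hγ]
    linarith
  · -- tendsto atTop
    apply tendsto_atTop_mono' atTop (f₁ := fun r : ℝ => 2*r)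
    · filter_upwards with r
      have := hInn r
      simp only [hγ]; linarith
    · exact (tendsto_id.const_mul_atTop (by norm_num : (0:ℝ) < 2))
  · -- bound
    intro r hr
    rcases eq_or_lt_of_le hr with h|h
    · rw [← h, hγ0, h0]
    · have := hIlb r h
      simp only [hγ]; linarith


section
variable {m : ℕ} {w : ℝ → ℝ} {M K : ℝ}

lemma fd_nonneg (hw : MemoryKernel w) (u v : ℝ → EuclideanSpace ℝ (Fin m)) :
    0 ≤ fadingDist w u v := by
  apply Real.iSup_nonneg
  intro s
  exact mul_nonneg (hw.2.2.1 _ (neg_nonneg.2 s.2)).1 (norm_nonneg _)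

lemma fd_term_le_const (hw : MemoryKernel w)
    {u v : ℝ → EuclideanSpace ℝ (Fin m)} (hu : u ∈ KMK m M K) (hv : v ∈ KMK m M K)
    (s : Set.Iic (0:ℝ)) : w (-(s:ℝ)) * ‖u s - v s‖ ≤ 2 * M := by
  have hs : (s:ℝ) ≤ 0 := s.2
  have h1 := hw.2.2.1 (-(s:ℝ)) (by linarith)
  have h2 : ‖u s - v s‖ ≤ 2 * M := by
    calc ‖u ↑s - v ↑s‖ ≤ ‖u ↑s‖ + ‖v ↑s‖ := norm_sub_le _ _
    _ ≤ M + M := add_le_add (hu.1 _ hs) (hv.1 _ hs)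
    _ = 2 * M := by ring
  calc w (-(s:ℝ)) * ‖u s - v s‖ ≤ 1 * (2*M) :=
        mul_le_mul h1.2 h2 (norm_nonneg _) zero_le_one
  _ = 2*M := one_mul _

lemma fd_bddAbove (hw : MemoryKernel w)
    {u v : ℝ → EuclideanSpace ℝ (Fin m)} (hu : u ∈ KMK m M K) (hv : v ∈ KMK m M K) :
    BddAbove (Set.range fun s : Set.Iic (0:ℝ) => w (-(s:ℝ)) * ‖u s - v s‖) := by
  refine ⟨2*M, ?_⟩
  rintro x ⟨s, rfl⟩
  exact fd_term_le_const hw hu hv s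

lemma fd_le_two_M (hw : MemoryKernel w) (hM : 0 < M)
    {u v : ℝ → EuclideanSpace ℝ (Fin m)} (hu : u ∈ KMK m M K) (hv : v ∈ KMK m M K) :
    fadingDist w u v ≤ 2 * M :=
  Real.iSup_le (fd_term_le_const hw hu hv) (by linarith)

lemma fd_term_le (hw : MemoryKernel w)
    {u v : ℝ → EuclideanSpace ℝ (Fin m)} (hu : u ∈ KMK m M K) (hv : v ∈ KMK m M K)
    (s : Set.Iic (0:ℝ)) : w (-(s:ℝ)) * ‖u s - v s‖ ≤ fadingDist w u v :=
  le_ciSup (fd_bddAbove hw hu hv) s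

lemma fd_symm (u v : ℝ → EuclideanSpace ℝ (Fin m)) :
    fadingDist w u v = fadingDist w v u := by
  unfold fadingDist
  congr 1; funext s; rw [norm_sub_rev]

lemma fd_triangle (hw : MemoryKernel w)
    {u v z : ℝ → EuclideanSpace ℝ (Fin m)} (hu : u ∈ KMK m M K)
    (hv : v ∈ KMK m M K) (hz : z ∈ KMK m M K) :
    fadingDist w u z ≤ fadingDist w u v + fadingDist w v z := by
  apply Real.iSup_le _ (add_nonneg (fd_nonneg hw u v) (fd_nonneg hw v z))
  intro s
  have h1 : w (-(s:ℝ)) * ‖u s - z s‖ ≤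
      w (-(s:ℝ)) * ‖u s - v s‖ + w (-(s:ℝ)) * ‖v s - z s‖ := by
    rw [← mul_add]
    have := hw.2.2.1 (-(s:ℝ)) (neg_nonneg.2 s.2)
    apply mul_le_mul_of_nonneg_left _ this.1
    calc ‖u ↑s - z ↑s‖ = ‖(u ↑s - v ↑s) + (v ↑s - z ↑s)‖ := by abel_nf
    _ ≤ _ := norm_add_le _ _
  exact h1.trans (add_le_add (fd_term_le hw hu hv s) (fd_term_le hw hv hz s))


lemma zero_mem_KMK (hM : 0 ≤ M) (hK : 0 ≤ K) :
    (fun _ : ℝ => (0 : EuclideanSpace ℝ (Fin m))) ∈ KMK m M K := by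
  constructor
  · intro s _; simpa using hM
  · intro s _ s' _; simp
    positivity

noncomputable def cseg (u v : ℝ → EuclideanSpace ℝ (Fin m)) (t : ℝ) :
    ℝ → EuclideanSpace ℝ (Fin m) := fun s => u s + t • (v s - u s)

lemma cseg_eq (u v : ℝ → EuclideanSpace ℝ (Fin m)) (t s : ℝ) :
    cseg u v t s = (1 - t) • u s + t • v s := by
  simp only [cseg, smul_sub, sub_smul, one_smul]
  abel

lemma cseg_mem {u v : ℝ → EuclideanSpace ℝ (Fin m)} (hu : u ∈ KMK m M K)
    (hv : v ∈ KMK m M K) {t : ℝ} (ht : t ∈ Set.Icc (0:ℝ) 1) :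
    cseg u v t ∈ KMK m M K := by
  have h1 : (0:ℝ) ≤ 1 - t := by linarith [ht.2]
  constructor
  · intro s hs
    rw [cseg_eq]
    calc ‖(1 - t) • u s + t • v s‖ ≤ ‖(1-t) • u s‖ + ‖t • v s‖ := norm_add_le _ _
    _ = (1-t) * ‖u s‖ + t * ‖v s‖ := by
        rw [norm_smul, norm_smul, Real.norm_eq_abs, Real.norm_eq_abs,
          abs_of_nonneg h1, abs_of_nonneg ht.1]
    _ ≤ (1-t) * M + t * M := by
        apply add_le_add
        · exact mul_le_mul_of_nonneg_left (hu.1 s hs) h1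
        · exact mul_le_mul_of_nonneg_left (hv.1 s hs) ht.1
    _ = M := by ring
  · intro s hs s' hs'
    have : cseg u v t s - cseg u v t s' = (1 - t) • (u s - u s') + t • (v s - v s') := by
      rw [cseg_eq, cseg_eq, smul_sub, smul_sub]
      abel
    rw [this]
    calc ‖(1-t) • (u s - u s') + t • (v s - v s')‖
        ≤ (1-t) * ‖u s - u s'‖ + t * ‖v s - v s'‖ := by
          refine (norm_add_le _ _).trans (le_of_eq ?_)
          rw [norm_smul, norm_smul, Real.norm_eq_abs, Real.norm_eq_abs,
            abs_of_nonneg h1, abs_of_nonneg ht.1]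
    _ ≤ (1-t) * (K * |s - s'|) + t * (K * |s - s'|) := by
        apply add_le_add
        · exact mul_le_mul_of_nonneg_left (hu.2 s hs s' hs') h1
        · exact mul_le_mul_of_nonneg_left (hv.2 s hs s' hs') ht.1
    _ = K * |s - s'| := by ring

lemma cseg_dist (hw : MemoryKernel w) (hM : 0 ≤ M)
    {u v : ℝ → EuclideanSpace ℝ (Fin m)} (hu : u ∈ KMK m M K)
    (hv : v ∈ KMK m M K) (t t' : ℝ) :
    fadingDist w (cseg u v t) (cseg u v t') ≤ |t - t'| * (2 * M) := by
  apply Real.iSup_le _ (by positivity)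
  intro s
  have hs : (s:ℝ) ≤ 0 := s.2
  have hterm : cseg u v t s - cseg u v t' s = (t - t') • (v s - u s) := by
    simp only [cseg, sub_smul]
    abel
  rw [hterm, norm_smul, Real.norm_eq_abs]
  have h1 := hw.2.2.1 (-(s:ℝ)) (neg_nonneg.2 hs)
  have h2 : ‖v (s:ℝ) - u (s:ℝ)‖ ≤ 2 * M := by
    calc ‖v ↑s - u ↑s‖ ≤ ‖v ↑s‖ + ‖u ↑s‖ := norm_sub_le _ _
    _ ≤ M + M := add_le_add (hv.1 _ hs) (hu.1 _ hs)
    _ = 2 * M := by ring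
  calc w (-(s:ℝ)) * (|t - t'| * ‖v ↑s - u ↑s‖) ≤ 1 * (|t - t'| * (2*M)) := by
        apply mul_le_mul h1.2 _ (by positivity) zero_le_one
        exact mul_le_mul_of_nonneg_left h2 (abs_nonneg _)
  _ = |t - t'| * (2*M) := one_mul _

lemma F_bound (hw : MemoryKernel w) (hM : 0 < M) {p : ℕ}
    (F : (ℝ → EuclideanSpace ℝ (Fin m)) → EuclideanSpace ℝ (Fin p))
    {δ₁ : ℝ} (hδ₁ : 0 < δ₁)
    (hδ : ∀ u ∈ KMK m M K, ∀ v ∈ KMK m M K, fadingDist w u v < δ₁ → ‖F u - F v‖ < 1) :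
    ∃ B : ℝ, 0 ≤ B ∧ ∀ u ∈ KMK m M K, ∀ v ∈ KMK m M K, ‖F u - F v‖ ≤ B := by
  set N : ℕ := ⌈2 * M / δ₁⌉₊ + 1 with hN
  have hN0 : 0 < (N:ℝ) := by positivity
  have hNd : 2 * M / N < δ₁ := by
    rw [div_lt_iff₀ hN0]
    have h1 : 2 * M / δ₁ < N := by
      have := Nat.le_ceil (2 * M / δ₁)
      push_cast [hN]
      linarith
    calc 2 * M = (2 * M / δ₁) * δ₁ := by field_simp
    _ < N * δ₁ := by exact mul_lt_mul_of_pos_right h1 hδ₁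
    _ = δ₁ * N := by ring
  refine ⟨N, hN0.le, ?_⟩
  intro u hu v hv
  have key : ∀ i : ℕ, i ≤ N → ‖F u - F (cseg u v ((i:ℝ)/N))‖ ≤ i := by
    intro i
    induction i with
    | zero =>
      intro _
      have h : cseg u v (((0:ℕ):ℝ)/N) = u := by
        funext s; simp [cseg]
      rw [h]; simp
    | succ i ih =>
      intro hiN
      rw [show ((i+1:ℕ):ℝ) = (i:ℝ)+1 from by push_cast; ring]
      have hi : i ≤ N := by omega
      have hmem1 : ((i:ℝ)/N) ∈ Set.Icc (0:ℝ) 1 := by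
        constructor
        · positivity
        · rw [div_le_one hN0]; exact_mod_cast hi
      have hmem2 : (((i:ℝ)+1)/N) ∈ Set.Icc (0:ℝ) 1 := by
        constructor
        · positivity
        · rw [div_le_one hN0]; exact_mod_cast hiN
      have hd : fadingDist w (cseg u v ((i:ℝ)/N)) (cseg u v (((i:ℝ)+1)/N)) < δ₁ := by
        refine lt_of_le_of_lt (cseg_dist hw hM.le hu hv _ _) ?_
        have : |(i:ℝ)/N - ((i:ℝ)+1)/N| = 1/N := by
          rw [div_sub_div_same]
          rw [show (i:ℝ) - ((i:ℝ)+1) = -1 by ring]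
          rw [abs_div, abs_neg, abs_one, abs_of_pos hN0]
        rw [this]
        calc 1/N * (2*M) = 2*M/N := by ring
        _ < δ₁ := hNd
      have hstep := hδ _ (cseg_mem hu hv hmem1) _ (cseg_mem hu hv hmem2) hd
      calc ‖F u - F (cseg u v (((i:ℝ)+1)/N))‖
          ≤ ‖F u - F (cseg u v ((i:ℝ)/N))‖ +
            ‖F (cseg u v ((i:ℝ)/N)) - F (cseg u v (((i:ℝ)+1)/N))‖ := by
            have := norm_add_le (F u - F (cseg u v ((i:ℝ)/N)))
              (F (cseg u v ((i:ℝ)/N)) - F (cseg u v (((i:ℝ)+1)/N)))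
            simpa using this
      _ ≤ (i:ℝ) + 1 := add_le_add (ih hi) hstep.le
  have := key N le_rfl
  have hvN : cseg u v ((N:ℝ)/N) = v := by
    funext s
    rw [div_self hN0.ne']
    simp [cseg]
  rwa [hvN] at this


noncomputable def ratSeq : ℕ → ℝ := fun k => min ((Denumerable.ofNat ℚ k : ℚ) : ℝ) 0

lemma ratSeq_nonpos (k : ℕ) : ratSeq k ≤ 0 := min_le_right _ _

lemma ratSeq_dense : ∀ t : ℝ, t ≤ 0 → ∀ η > (0:ℝ), ∃ k, |t - ratSeq k| < η := by
  intro t ht η hη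
  obtain ⟨q, hq⟩ := exists_rat_near t hη
  obtain ⟨k, hk⟩ : ∃ k, Denumerable.ofNat ℚ k = q := ⟨_, Denumerable.ofNat_encode q⟩
  refine ⟨k, ?_⟩
  rw [ratSeq, hk]
  rcases le_or_gt ((q:ℝ)) 0 with h|h
  · rwa [min_eq_left h]
  · rw [min_eq_right h.le, sub_zero]
    have : |t| ≤ |t - q| := by
      rw [abs_of_nonpos ht, abs_of_nonpos (by linarith : t - (q:ℝ) ≤ 0)]
      linarith
    exact lt_of_le_of_lt this hq

lemma seq_compact_KMK (hw : MemoryKernel w) (hM : 0 < M) (hK : 0 < K)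
    (u : ℕ → (ℝ → EuclideanSpace ℝ (Fin m))) (hu : ∀ n, u n ∈ KMK m M K) :
    ∃ v ∈ KMK m M K, ∃ φ : ℕ → ℕ, StrictMono φ ∧
      ∀ ε > (0:ℝ), ∀ᶠ n in atTop, fadingDist w v (u (φ n)) < ε := by
  set s : Set (ℕ → EuclideanSpace ℝ (Fin m)) :=
    Set.univ.pi fun _ => Metric.closedBall 0 M with hs
  have hcomp : IsCompact s := isCompact_univ_pi fun _ => isCompact_closedBall 0 M
  have hmem : ∀ n, (fun k => u n (ratSeq k)) ∈ s := by
    intro n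
    rw [hs, Set.mem_univ_pi]
    intro k
    rw [Metric.mem_closedBall, dist_zero_right]
    exact (hu n).1 _ (ratSeq_nonpos k)
  obtain ⟨a, -, φ, hφ, hconv⟩ := hcomp.isSeqCompact hmem
  have hconvk : ∀ k, Tendsto (fun n => u (φ n) (ratSeq k)) atTop (𝓝 (a k)) := by
    intro k
    have := tendsto_pi_nhds.1 hconv k
    exact this
  have hcau : ∀ t : ℝ, t ≤ 0 → ∃ b, Tendsto (fun n => u (φ n) t) atTop (𝓝 b) := by
    intro t ht
    have hC : CauchySeq (fun n => u (φ n) t) := by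
      rw [Metric.cauchySeq_iff]
      intro ε hε
      obtain ⟨k, hk⟩ := ratSeq_dense t ht (ε/(4*K)) (by positivity)
      have hcau2 : CauchySeq (fun n => u (φ n) (ratSeq k)) := (hconvk k).cauchySeq
      rw [Metric.cauchySeq_iff] at hcau2
      obtain ⟨N, hN⟩ := hcau2 (ε/2) (by linarith)
      refine ⟨N, fun i hi j hj => ?_⟩
      have hlip1 : ‖u (φ i) t - u (φ i) (ratSeq k)‖ ≤ K * |t - ratSeq k| :=
        (hu (φ i)).2 t ht _ (ratSeq_nonpos k)
      have hlip2 : ‖u (φ j) (ratSeq k) - u (φ j) t‖ ≤ K * |ratSeq k - t| :=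
        (hu (φ j)).2 _ (ratSeq_nonpos k) t ht
      have hmid := hN i hi j hj
      have habs : K * |t - ratSeq k| ≤ ε/4 := by
        have : K * |t - ratSeq k| ≤ K * (ε/(4*K)) :=
          mul_le_mul_of_nonneg_left hk.le hK.le
        calc K * |t - ratSeq k| ≤ K * (ε/(4*K)) := this
        _ = ε/4 := by field_simp
      calc dist (u (φ i) t) (u (φ j) t)
          ≤ dist (u (φ i) t) (u (φ i) (ratSeq k)) +
            dist (u (φ i) (ratSeq k)) (u (φ j) (ratSeq k)) +
            dist (u (φ j) (ratSeq k)) (u (φ j) t) := dist_triangle4 _ _ _ _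
      _ < ε/4 + ε/2 + ε/4 := by
          apply add_lt_add_of_lt_of_le
          · apply add_lt_add_of_le_of_lt
            · rw [dist_eq_norm]; exact hlip1.trans habs
            · exact hmid
          · rw [dist_eq_norm]
            refine hlip2.trans ?_
            rw [abs_sub_comm]; exact habs
      _ = ε := by ring
    exact cauchySeq_tendsto_of_complete hC
  choose! b hb using hcau
  set v : ℝ → EuclideanSpace ℝ (Fin m) := fun t => if t ≤ 0 then b t else 0 with hvdef
  have hv : ∀ t : ℝ, t ≤ 0 → Tendsto (fun n => u (φ n) t) atTop (𝓝 (v t)) := by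
    intro t ht
    rw [hvdef]
    simpa [if_pos ht] using hb t ht
  have hvK : v ∈ KMK m M K := by
    constructor
    · intro t ht
      exact le_of_tendsto ((hv t ht).norm)
        (Eventually.of_forall fun n => (hu (φ n)).1 t ht)
    · intro t ht t' ht'
      exact le_of_tendsto (((hv t ht).sub (hv t' ht')).norm)
        (Eventually.of_forall fun n => (hu (φ n)).2 t ht t' ht')
  refine ⟨v, hvK, φ, hφ, ?_⟩
  intro ε hε
  set ε' := ε/2 with hε'
  have hε'pos : 0 < ε' := by rw [hε']; linarith
  have hc : (0:ℝ) < ε'/(2*M+1) := by positivity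
  obtain ⟨T0, hT0⟩ := (eventually_atTop).1 (hw.2.2.2.eventually_lt_const hc)
  set T := max T0 0 with hT
  set η := ε'/(4*K) with hη
  have hηpos : 0 < η := by positivity
  set N := ⌈T/η⌉₊ with hNdef
  have hgrid : ∀ᶠ n in atTop, ∀ j ∈ Finset.range (N+1),
      ‖u (φ n) (-(j:ℝ)*η) - v (-(j:ℝ)*η)‖ < ε'/4 := by
    rw [Filter.eventually_all_finset]
    intro j _
    have hj0 : (-(j:ℝ)*η) ≤ 0 := by
      rw [neg_mul, neg_nonpos]
      positivity
    have h2 : Tendsto (fun n => ‖u (φ n) (-(j:ℝ)*η) - v (-(j:ℝ)*η)‖) atTop (𝓝 0) := by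
      have := (hv _ hj0).sub (tendsto_const_nhds (x := v (-(j:ℝ)*η)))
      simpa using this.norm
    exact h2.eventually_lt_const (by linarith)
  filter_upwards [hgrid] with n hn
  have hfinal : fadingDist w v (u (φ n)) ≤ ε' := by
    apply Real.iSup_le _ hε'pos.le
    rintro ⟨t, ht⟩
    have ht' : t ≤ 0 := ht
    have hnorm2M : ‖v t - u (φ n) t‖ ≤ 2*M := by
      calc ‖v t - u (φ n) t‖ ≤ ‖v t‖ + ‖u (φ n) t‖ := norm_sub_le _ _
      _ ≤ M + M := add_le_add (hvK.1 t ht') ((hu (φ n)).1 t ht')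
      _ = 2*M := by ring
    have hwnn := hw.2.2.1 (-t) (neg_nonneg.2 ht')
    by_cases hcase : t < -T
    · have h1 : w (-t) < ε'/(2*M+1) := by
        apply hT0
        have : T0 ≤ T := le_max_left _ _
        linarith
      calc w (-t) * ‖v t - u (φ n) t‖ ≤ (ε'/(2*M+1)) * (2*M) :=
            mul_le_mul h1.le hnorm2M (norm_nonneg _) hc.le
      _ ≤ (ε'/(2*M+1)) * (2*M+1) := by
            apply mul_le_mul_of_nonneg_left (by linarith) hc.le
      _ = ε' := by field_simp
    · push_neg at hcase
      set j := ⌊(-t)/η⌋₊ with hjdef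
      have htnn : 0 ≤ -t := neg_nonneg.2 ht'
      have hjle : (j:ℝ)*η ≤ -t := by
        have h := Nat.floor_le (a := (-t)/η) (by positivity)
        calc (j:ℝ)*η ≤ ((-t)/η)*η := mul_le_mul_of_nonneg_right h hηpos.le
        _ = -t := by field_simp
      have hjlt : -t < ((j:ℝ)+1)*η := by
        have h := Nat.lt_floor_add_one ((-t)/η)
        calc -t = ((-t)/η)*η := by field_simp
        _ < ((j:ℝ)+1)*η := mul_lt_mul_of_pos_right h hηpos
      have hjN : j ≤ N := by
        have h1 : (j:ℝ)*η ≤ T := le_trans hjle (by linarith)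
        have h2 : T ≤ (N:ℝ)*η := by
          have := Nat.le_ceil (T/η)
          calc T = (T/η)*η := by field_simp
          _ ≤ (N:ℝ)*η := mul_le_mul_of_nonneg_right this hηpos.le
        have : (j:ℝ) ≤ N := by
          have := h1.trans h2
          exact le_of_mul_le_mul_right this hηpos
        exact_mod_cast this
      set g := -(j:ℝ)*η with hgdef
      have hg0 : g ≤ 0 := by
        rw [hgdef, neg_mul, neg_nonpos]
        positivity
      have hgt : |t - g| ≤ η := by
        rw [abs_le]
        constructor
        · rw [hgdef]; nlinarith [hjlt]
        · rw [hgdef]; nlinarith [hjle]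
      have herr : ‖u (φ n) g - v g‖ < ε'/4 := hn j (Finset.mem_range.2 (by omega))
      have hchain : ‖v t - u (φ n) t‖ ≤ ε' := by
        calc ‖v t - u (φ n) t‖
            ≤ ‖v t - v g‖ + ‖v g - u (φ n) g‖ + ‖u (φ n) g - u (φ n) t‖ := by
              have : v t - u (φ n) t =
                  (v t - v g) + (v g - u (φ n) g) + (u (φ n) g - u (φ n) t) := by abel
              rw [this]
              exact norm_add₃_le
        _ ≤ K * |t - g| + ε'/4 + K * |g - t| := by
              apply add_le_add (add_le_add (hvK.2 t ht' g hg0) _) ((hu (φ n)).2 g hg0 t ht')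
              rw [norm_sub_rev]
              exact herr.le
        _ ≤ K * η + ε'/4 + K * η := by
              apply add_le_add (add_le_add _ le_rfl) _
              · exact mul_le_mul_of_nonneg_left hgt hK.le
              · rw [abs_sub_comm]
                exact mul_le_mul_of_nonneg_left hgt hK.le
        _ = ε'/2 + ε'/4 := by rw [hη]; field_simp; ring
        _ ≤ ε' := by linarith
      calc w (-t) * ‖v t - u (φ n) t‖ ≤ 1 * ε' := by
            apply mul_le_mul hwnn.2 hchain (norm_nonneg _) zero_le_one
      _ = ε' := one_mul _
  calc fadingDist w v (u (φ n)) ≤ ε' := hfinal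
  _ < ε := by rw [hε']; linarith


lemma unif_cont (hw : MemoryKernel w) (hM : 0 < M) (hK : 0 < K) {p : ℕ}
    (F : (ℝ → EuclideanSpace ℝ (Fin m)) → EuclideanSpace ℝ (Fin p))
    (hF : ∀ u ∈ KMK m M K, ∀ ε > (0:ℝ), ∃ δ > (0:ℝ), ∀ v ∈ KMK m M K,
        fadingDist w u v < δ → ‖F u - F v‖ < ε) :
    ∀ ε > (0:ℝ), ∃ δ > (0:ℝ), ∀ u ∈ KMK m M K, ∀ v ∈ KMK m M K,
      fadingDist w u v < δ → ‖F u - F v‖ < ε := by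
  by_contra h
  push_neg at h
  obtain ⟨ε, hε, hcon⟩ := h
  have hseq : ∀ n : ℕ, ∃ u ∈ KMK m M K, ∃ v ∈ KMK m M K,
      fadingDist w u v < 1/((n:ℝ)+1) ∧ ε ≤ ‖F u - F v‖ := by
    intro n
    obtain ⟨u, hu, v, hv, h1, h2⟩ := hcon (1/((n:ℝ)+1)) (by positivity)
    exact ⟨u, hu, v, hv, h1, h2⟩
  choose un hun vn hvn hd hFd using hseq
  obtain ⟨z, hz, φ, hφ, hconv⟩ := seq_compact_KMK hw hM hK un hun
  obtain ⟨δ₀, hδ₀, hδ⟩ := hF z hz (ε/2) (by linarith)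
  have h1 : ∀ᶠ n in atTop, fadingDist w z (un (φ n)) < δ₀/2 := hconv _ (by linarith)
  have h2 : ∀ᶠ n in atTop, (1:ℝ)/((φ n : ℝ) + 1) < δ₀/2 :=
    (tendsto_one_div_add_atTop_nhds_zero_nat.comp hφ.tendsto_atTop).eventually_lt_const
      (by linarith)
  obtain ⟨n, hn1, hn2⟩ := (h1.and h2).exists
  have hdz : fadingDist w z (vn (φ n)) < δ₀ := by
    calc fadingDist w z (vn (φ n))
        ≤ fadingDist w z (un (φ n)) + fadingDist w (un (φ n)) (vn (φ n)) :=
          fd_triangle hw hz (hun (φ n)) (hvn (φ n))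
    _ < δ₀/2 + 1/((φ n : ℝ)+1) := add_lt_add hn1 (hd (φ n))
    _ < δ₀/2 + δ₀/2 := by linarith
    _ = δ₀ := by ring
  have hu2 : ‖F z - F (un (φ n))‖ < ε/2 := hδ _ (hun (φ n)) (by linarith [hn1])
  have hv2 : ‖F z - F (vn (φ n))‖ < ε/2 := hδ _ (hvn (φ n)) hdz
  have : ‖F (un (φ n)) - F (vn (φ n))‖ < ε := by
    calc ‖F (un (φ n)) - F (vn (φ n))‖
        ≤ ‖F (un (φ n)) - F z‖ + ‖F z - F (vn (φ n))‖ := by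
          have := norm_add_le (F (un (φ n)) - F z) (F z - F (vn (φ n)))
          simpa using this
    _ < ε/2 + ε/2 := by
        rw [norm_sub_rev]
        exact add_lt_add hu2 hv2
    _ = ε := by ring
  exact absurd (hFd (φ n)) (not_le.2 this)

end


/-- on the set of bounded Lipschitz past inputs, a functional `F` is
continuous for the `w`-fading distance iff it admits a class-`K∞` modulus of
continuity; i.e. fading memory and uniform fading memory coincide. -/
theorem stmt9 (m p : ℕ) (hm : 1 ≤ m) (hp : 1 ≤ p)
    (M K : ℝ) (hM : 0 < M) (hK : 0 < K)
    (w : ℝ → ℝ) (hw : MemoryKernel w)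
    (F : (ℝ → EuclideanSpace ℝ (Fin m)) → EuclideanSpace ℝ (Fin p)) :
    (∀ u ∈ KMK m M K, ∀ ε > (0:ℝ), ∃ δ > (0:ℝ), ∀ v ∈ KMK m M K,
        fadingDist w u v < δ → ‖F u - F v‖ < ε) ↔
    (∃ γ : ℝ → ℝ, ClassKInf γ ∧
      ∀ u ∈ KMK m M K, ∀ v ∈ KMK m M K, ‖F u - F v‖ ≤ γ (fadingDist w u v)) := by
  constructor
  · intro hF
    obtain ⟨δ₁, hδ₁, hδu⟩ := unif_cont hw hM hK F hF 1 one_pos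
    obtain ⟨B, hB, hFB⟩ := F_bound hw hM F hδ₁ hδu
    set S : ℝ → Set ℝ := fun r => {x | ∃ u ∈ KMK m M K, ∃ v ∈ KMK m M K,
      fadingDist w u v ≤ r ∧ x = ‖F u - F v‖} with hS
    have hbdd : ∀ r, BddAbove (S r) := by
      intro r
      refine ⟨B, ?_⟩
      rintro x ⟨u, hu, v, hv, -, rfl⟩
      exact hFB u hu v hv
    set ω : ℝ → ℝ := fun r => sSup (S r) with hω
    have hnn : ∀ r, 0 ≤ ω r := by
      intro r
      apply Real.sSup_nonneg
      rintro x ⟨u, hu, v, hv, -, rfl⟩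
      exact norm_nonneg _
    have hmono : Monotone ω := by
      intro r r' hrr'
      apply Real.sSup_le _ (hnn r')
      rintro x ⟨u, hu, v, hv, hle, rfl⟩
      exact le_csSup (hbdd r') ⟨u, hu, v, hv, hle.trans hrr', rfl⟩
    have hsmall : ∀ ε > (0:ℝ), ∃ δ > (0:ℝ), ∀ r, 0 ≤ r → r < δ → ω r ≤ ε := by
      intro ε hε
      obtain ⟨δ, hδ, hδ'⟩ := unif_cont hw hM hK F hF ε hε
      refine ⟨δ, hδ, fun r _ hrδ => ?_⟩
      apply Real.sSup_le _ hε.le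
      rintro x ⟨u, hu, v, hv, hle, rfl⟩
      exact (hδ' u hu v hv (lt_of_le_of_lt hle hrδ)).le
    have h0 : ω 0 = 0 := by
      refine le_antisymm ?_ (hnn 0)
      refine le_of_forall_pos_le_add ?_
      intro ε hε
      obtain ⟨δ, hδ, h⟩ := hsmall ε hε
      have := h 0 le_rfl hδ
      linarith
    obtain ⟨γ, hγ, hγω⟩ := exists_classKInf_ge ω hmono hnn h0 hsmall
    refine ⟨γ, hγ, ?_⟩
    intro u hu v hv
    have hd0 := fd_nonneg hw u v
    have h1 : ‖F u - F v‖ ≤ ω (fadingDist w u v) :=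
      le_csSup (hbdd _) ⟨u, hu, v, hv, le_rfl, rfl⟩
    exact h1.trans (hγω _ hd0)
  · rintro ⟨γ, ⟨hγc, hγm, hγ0, hγnn, hγtop⟩, hγb⟩ u hu ε hε
    have hcw : ContinuousWithinAt γ (Set.Ici 0) 0 := hγc 0 Set.self_mem_Ici
    rw [ContinuousWithinAt, hγ0, Metric.tendsto_nhdsWithin_nhds] at hcw
    obtain ⟨δ, hδ, h⟩ := hcw ε hε
    refine ⟨δ, hδ, fun v hv hd => ?_⟩
    have hd0 := fd_nonneg hw u v
    have h2 := h (x := fadingDist w u v) hd0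
      (by rw [Real.dist_eq, sub_zero, abs_of_nonneg hd0]; exact hd)
    rw [Real.dist_eq, sub_zero] at h2
    have hγd : γ (fadingDist w u v) < ε := lt_of_le_of_lt (le_abs_self _) h2
    exact lt_of_le_of_lt (hγb u hu v hv) hγd
end

section
/- Let n, m, p ≥ 1, let w be a memory kernel, and let γ, α be of class K∞. Let ψ : ℝ^n → ((−∞,0] → ℝ^m) assign to each state a measurable past input, and assume sup_{s≤0} ‖ψ(x_a)(s) − ψ(x_b)(s)‖ ≤ α(‖x_a − x_b‖) for all x_a, x_b ∈ ℝ^n. For x₀ ∈ ℝ^n, measurable essentially bounded u : [0,∞) → ℝ^m, and t ≥ 0, define c(x₀,u,t) : (−∞,0] → ℝ^m by c(x₀,u,t)(s) = ψ(x₀)(s+t) if s+t ≤ 0 and c(x₀,u,t)(s) = u(s+t) if s+t > 0. Let F map functions (−∞,0] → ℝ^m to ℝ^p and assume the uniform fading-memory inequality ‖F(c(x_a,u_a,t)) − F(c(x_b,u_b,t))‖ ≤ γ(esssup_{s≤0} w(−s)‖c(x_a,u_a,t)(s) − c(x_b,u_b,t)(s)‖) holds for all x_a, x_b ∈ ℝ^n,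 all measurable essentially bounded u_a, u_b, and all t ≥ 0. Then for all such x_a, x_b, u_a, u_b and t ≥ 0: ‖F(c(x_a,u_a,t)) − F(c(x_b,u_b,t))‖ ≤ max( γ(w(t)·α(‖x_a − x_b‖)), γ(esssup_{s∈[0,t]} w(t−s)‖u_a(s) − u_b(s)‖) ). -/
open MeasureTheory Filter Set

/-- `concatPast ψ x₀ u t` is the past, at time `t`, of the temporal concatenation of the
negative-time input `ψ(x₀)` with the positive-time input `u`. -/
noncomputable def concatPast {n m : ℕ}
    (ψ : EuclideanSpace ℝ (Fin n) → ℝ → EuclideanSpace ℝ (Fin m))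
    (x₀ : EuclideanSpace ℝ (Fin n)) (u : ℝ → EuclideanSpace ℝ (Fin m)) (t : ℝ) :
    ℝ → EuclideanSpace ℝ (Fin m) :=
  fun s => if s + t ≤ 0 then ψ x₀ (s + t) else u (s + t)

/-- a uniform fading-memory memory functional realized through a uniformly
continuous initialization map `ψ` satisfies a fading-memory bound that splits into a
`KL`-type decay of the initial-condition mismatch and a fading bound on the
positive-time input mismatch. -/
theorem stmt11 (n m p : ℕ) (hn : 1 ≤ n) (hm : 1 ≤ m) (hp : 1 ≤ p)
    (w : ℝ → ℝ) (hw : MemoryKernel w)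
    (γ α : ℝ → ℝ) (hγ : ClassKInf γ) (hα : ClassKInf α)
    (ψ : EuclideanSpace ℝ (Fin n) → ℝ → EuclideanSpace ℝ (Fin m))
    (hψm : ∀ x₀, Measurable (ψ x₀))
    (hψ : ∀ x_a x_b : EuclideanSpace ℝ (Fin n), ∀ s ≤ (0:ℝ),
      ‖ψ x_a s - ψ x_b s‖ ≤ α ‖x_a - x_b‖)
    (F : (ℝ → EuclideanSpace ℝ (Fin m)) → EuclideanSpace ℝ (Fin p))
    (hFM : ∀ (x_a x_b : EuclideanSpace ℝ (Fin n))
        (u_a u_b : ℝ → EuclideanSpace ℝ (Fin m)),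
      Measurable u_a → Measurable u_b →
      (∃ C, ∀ᵐ s ∂volume, ‖u_a s‖ ≤ C) → (∃ C, ∀ᵐ s ∂volume, ‖u_b s‖ ≤ C) →
      ∀ t ≥ (0:ℝ),
        ‖F (concatPast ψ x_a u_a t) - F (concatPast ψ x_b u_b t)‖ ≤
        γ (essSupOn
            (fun s => w (-s) * ‖concatPast ψ x_a u_a t s - concatPast ψ x_b u_b t s‖)
            (Set.Iic 0))) :
    ∀ (x_a x_b : EuclideanSpace ℝ (Fin n))
        (u_a u_b : ℝ → EuclideanSpace ℝ (Fin m)),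
      Measurable u_a → Measurable u_b →
      (∃ C, ∀ᵐ s ∂volume, ‖u_a s‖ ≤ C) → (∃ C, ∀ᵐ s ∂volume, ‖u_b s‖ ≤ C) →
      ∀ t ≥ (0:ℝ),
        ‖F (concatPast ψ x_a u_a t) - F (concatPast ψ x_b u_b t)‖ ≤
        max (γ (w t * α ‖x_a - x_b‖))
          (γ (essSupOn (fun s => w (t - s) * ‖u_a s - u_b s‖) (Set.Icc 0 t))) := by
  intro x_a x_b u_a u_b hua hub hba hbb t ht
  obtain ⟨Ca, hCa⟩ := hba
  obtain ⟨Cb, hCb⟩ := hbb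
  have key := hFM x_a x_b u_a u_b hua hub ⟨Ca, hCa⟩ ⟨Cb, hCb⟩ t ht
  set A := w t * α ‖x_a - x_b‖ with hAdef
  set g : ℝ → ℝ := fun s => w (t - s) * ‖u_a s - u_b s‖ with hgdef
  set B := essSupOn g (Set.Icc 0 t) with hBdef
  set f : ℝ → ℝ := fun s =>
    w (-s) * ‖concatPast ψ x_a u_a t s - concatPast ψ x_b u_b t s‖ with hfdef
  set E := essSupOn f (Set.Iic 0) with hEdef
  have hΔ : (0:ℝ) ≤ ‖x_a - x_b‖ := norm_nonneg _
  have hα0 : 0 ≤ α ‖x_a - x_b‖ := hα.2.2.2.1 _ hΔ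
  have hwt := hw.2.2.1 t ht
  have hA0 : 0 ≤ A := mul_nonneg hwt.1 hα0
  -- boundedness of g a.e. on Icc 0 t
  have hgbdd : ∀ᵐ s ∂(volume.restrict (Set.Icc 0 t)), g s ≤ Ca + Cb := by
    rw [ae_restrict_iff' measurableSet_Icc]
    filter_upwards [hCa, hCb] with s ha hb hs
    have hts : (0:ℝ) ≤ t - s := by linarith [hs.2]
    have hw1 := hw.2.2.1 (t - s) hts
    calc g s ≤ 1 * ‖u_a s - u_b s‖ :=
          mul_le_mul_of_nonneg_right hw1.2 (norm_nonneg _)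
      _ ≤ Ca + Cb := by
          rw [one_mul]
          exact (norm_sub_le _ _).trans (add_le_add ha hb)
  have hgB : ∀ᵐ s ∂(volume.restrict (Set.Icc 0 t)), g s ≤ B :=
    ae_le_essSup ⟨Ca + Cb, hgbdd⟩
  -- transfer to the shifted set via translation invariance
  have hemb : MeasurableEmbedding (fun s : ℝ => s + t) :=
    (MeasurableEquiv.addRight t).measurableEmbedding
  have hshift : ∀ᵐ s ∂(volume : Measure ℝ), s + t ∈ Set.Icc 0 t → g (s + t) ≤ B := by
    rw [ae_restrict_iff' measurableSet_Icc] at hgB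
    rw [← map_add_right_eq_self (volume : Measure ℝ) t, hemb.ae_map_iff] at hgB
    exact hgB
  -- a.e. bound for f on Iic 0
  have hfE : ∀ᵐ s ∂(volume.restrict (Set.Iic 0)), f s ≤ max A B := by
    rw [ae_restrict_iff' measurableSet_Iic]
    filter_upwards [hshift] with s hB' hs
    have hs0 : s ≤ 0 := hs
    by_cases hst : s + t ≤ 0
    · -- initial-condition part
      have hns : (0:ℝ) ≤ -s := by linarith
      have hws := hw.2.2.1 (-s) hns
      have hmono : w (-s) ≤ w t := hw.2.1 ht hns (by linarith)
      have hfs : f s = w (-s) * ‖ψ x_a (s + t) - ψ x_b (s + t)‖ := by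
        simp only [hfdef, concatPast, if_pos hst]
      rw [hfs]
      refine le_max_of_le_left ?_
      calc w (-s) * ‖ψ x_a (s + t) - ψ x_b (s + t)‖
          ≤ w (-s) * α ‖x_a - x_b‖ :=
            mul_le_mul_of_nonneg_left (hψ x_a x_b (s + t) hst) hws.1
        _ ≤ A := mul_le_mul_of_nonneg_right hmono hα0
    · -- input part
      push_neg at hst
      have hmem : s + t ∈ Set.Icc 0 t := ⟨le_of_lt hst, by linarith⟩
      have hfs : f s = g (s + t) := by
        simp only [hfdef, hgdef, concatPast, if_neg (not_le.mpr hst)]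
        congr 2
        ring
      rw [hfs]
      exact le_max_of_le_right (hB' hmem)
  -- bounds on E
  haveI hne : (Filter.NeBot (ae ((volume : Measure ℝ).restrict (Set.Iic 0)))) := by
    rw [ae_neBot]
    intro h
    have h2 := congrArg (fun μ : Measure ℝ => μ (Set.Iic (0:ℝ))) h
    simp [Measure.restrict_apply, measurableSet_Iic] at h2
  have hbddf : Filter.IsBoundedUnder (· ≤ ·) (ae (volume.restrict (Set.Iic 0))) f :=
    ⟨max A B, hfE⟩
  have hfnn : ∀ᵐ s ∂((volume : Measure ℝ).restrict (Set.Iic 0)), (0:ℝ) ≤ f s := by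
    rw [ae_restrict_iff' measurableSet_Iic]
    filter_upwards with s hs
    have hs0 : s ≤ 0 := hs
    exact mul_nonneg (hw.2.2.1 (-s) (by linarith)).1 (norm_nonneg _)
  have hE0 : 0 ≤ E :=
    Filter.le_limsup_of_frequently_le hfnn.frequently hbddf
  have hEle : E ≤ max A B :=
    Filter.limsup_le_of_le ((Filter.IsBoundedUnder.isCoboundedUnder_le ⟨0, hfnn⟩)) hfE
  -- conclude via monotonicity of γ
  refine key.trans ?_
  rcases le_max_iff.mp hEle with h | h
  · refine le_max_of_le_left ?_
    rcases eq_or_lt_of_le h with heq | h'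
    · exact le_of_eq (congrArg γ heq)
    · exact le_of_lt (hγ.2.1 hE0 (hE0.trans h) h')
  · refine le_max_of_le_right ?_
    rcases eq_or_lt_of_le h with heq | h'
    · exact le_of_eq (congrArg γ heq)
    · exact le_of_lt (hγ.2.1 hE0 (hE0.trans h) h')
end

section
/- Let n ≥ 1, let w be a memory kernel with w(0) = 1, β of class KL, γ of class K∞, and λ, Ī, M̄ > 0. Let M : ℝ^n → ℝ be λ-Lipschitz (memristance), let I_a, I_b : [0,∞) → ℝ be continuous with |I_a(t)| ≤ Ī and |I_b(t)| ≤ Ī for all t ≥ 0, and let x_a, x_b : [0,∞) → ℝ^n be continuous with |M(x_a(t))| ≤ M̄ for all t ≥ 0. Assume the internal-state fading-memory inequality: for all t ≥ 0, ‖x_a(t) − x_b(t)‖ ≤ β(‖x_a(0) − x_b(0)‖, t) + γ(sup_{s∈[0,t]} w(t−s)|I_a(s) − I_b(s)|). Then, writing S(t) = sup_{s∈[0,t]} w(t−s)|I_a(s) − I_b(s)|, the voltages U_i(t) = M(x_i(t))·I_i(t) satisfy, for all t ≥ 0: |U_a(t) − U_b(t)| ≤ Ī·λ·β(‖x_a(0)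 − x_b(0)‖, t) + M̄·S(t) + Ī·λ·γ(S(t)); in particular the current-driven memristor has fading memory from current to voltage. -/
open Filter Set

/-- fading memory of the current-driven memristor from current to voltage.
`S t` denotes `sup_{s∈[0,t]} w(t−s)|I_a(s) − I_b(s)|`. -/
theorem stmt14 (n : ℕ) (hn : 1 ≤ n)
    (w : ℝ → ℝ) (hw : MemoryKernel w) (hw0 : w 0 = 1)
    (β : ℝ → ℝ → ℝ) (hβ : ClassKL β)
    (γ : ℝ → ℝ) (hγ : ClassKInf γ)
    (lam Ibar Mbar : ℝ) (hlam : 0 < lam) (hIbar : 0 < Ibar) (hMbar : 0 < Mbar)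
    (M : EuclideanSpace ℝ (Fin n) → ℝ)
    (hMlip : ∀ x y : EuclideanSpace ℝ (Fin n), |M x - M y| ≤ lam * ‖x - y‖)
    (I_a I_b : ℝ → ℝ) (hIa : Continuous I_a) (hIb : Continuous I_b)
    (hIab : ∀ t ≥ (0:ℝ), |I_a t| ≤ Ibar) (hIbb : ∀ t ≥ (0:ℝ), |I_b t| ≤ Ibar)
    (x_a x_b : ℝ → EuclideanSpace ℝ (Fin n))
    (hxa : Continuous x_a) (hxb : Continuous x_b)
    (hMb : ∀ t ≥ (0:ℝ), |M (x_a t)| ≤ Mbar)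
    (hFMx : ∀ t ≥ (0:ℝ), ‖x_a t - x_b t‖ ≤ β ‖x_a 0 - x_b 0‖ t +
      γ (⨆ s : Set.Icc (0:ℝ) t, w (t - (s:ℝ)) * |I_a s - I_b s|)) :
    ∀ t ≥ (0:ℝ),
      |M (x_a t) * I_a t - M (x_b t) * I_b t| ≤
        Ibar * lam * β ‖x_a 0 - x_b 0‖ t +
        Mbar * (⨆ s : Set.Icc (0:ℝ) t, w (t - (s:ℝ)) * |I_a s - I_b s|) +
        Ibar * lam * γ (⨆ s : Set.Icc (0:ℝ) t, w (t - (s:ℝ)) * |I_a s - I_b s|) := by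
  intro t ht
  set S := ⨆ s : Set.Icc (0:ℝ) t, w (t - (s:ℝ)) * |I_a s - I_b s| with hS
  have hbdd : BddAbove (Set.range fun s : Set.Icc (0:ℝ) t =>
      w (t - (s:ℝ)) * |I_a s - I_b s|) := by
    refine ⟨2 * Ibar, ?_⟩
    rintro _ ⟨⟨s, hs0, hst⟩, rfl⟩
    have hts : (0:ℝ) ≤ t - s := by linarith
    have hw1 := (hw.2.2.1 _ hts).2
    have hw0' := (hw.2.2.1 _ hts).1
    have habs : |I_a s - I_b s| ≤ 2 * Ibar := by
      have := hIab s hs0; have := hIbb s hs0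
      calc |I_a s - I_b s| ≤ |I_a s| + |I_b s| := abs_sub _ _
        _ ≤ 2 * Ibar := by linarith
    calc w (t - s) * |I_a s - I_b s| ≤ 1 * |I_a s - I_b s| :=
          mul_le_mul_of_nonneg_right hw1 (abs_nonneg _)
      _ = |I_a s - I_b s| := one_mul _
      _ ≤ 2 * Ibar := habs
  have hItS : |I_a t - I_b t| ≤ S := by
    have := le_ciSup hbdd ⟨t, ht, le_refl t⟩ (f := fun s : Set.Icc (0:ℝ) t =>
      w (t - (s:ℝ)) * |I_a s - I_b s|)
    simpa [sub_self, hw0] using this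
  have hMt := hMb t ht
  have hIbt := hIbb t ht
  have hlip := hMlip (x_a t) (x_b t)
  have hfm := hFMx t ht
  have key : |M (x_a t) * I_a t - M (x_b t) * I_b t| ≤
      |M (x_a t)| * |I_a t - I_b t| + |M (x_a t) - M (x_b t)| * |I_b t| := by
    have : M (x_a t) * I_a t - M (x_b t) * I_b t =
        M (x_a t) * (I_a t - I_b t) + (M (x_a t) - M (x_b t)) * I_b t := by ring
    rw [this]
    calc _ ≤ |M (x_a t) * (I_a t - I_b t)| + |(M (x_a t) - M (x_b t)) * I_b t| :=
          abs_add_le _ _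
      _ = |M (x_a t)| * |I_a t - I_b t| + |M (x_a t) - M (x_b t)| * |I_b t| := by
          rw [abs_mul, abs_mul]
  have h1 : |M (x_a t)| * |I_a t - I_b t| ≤ Mbar * S :=
    mul_le_mul hMt hItS (abs_nonneg _) hMbar.le
  have h2 : |M (x_a t) - M (x_b t)| * |I_b t| ≤
      Ibar * lam * β ‖x_a 0 - x_b 0‖ t + Ibar * lam * γ S := by
    have hx : |M (x_a t) - M (x_b t)| ≤ lam * (β ‖x_a 0 - x_b 0‖ t + γ S) := by
      calc |M (x_a t) - M (x_b t)| ≤ lam * ‖x_a t - x_b t‖ := hlip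
        _ ≤ lam * (β ‖x_a 0 - x_b 0‖ t + γ S) := by
            exact mul_le_mul_of_nonneg_left hfm hlam.le
    calc |M (x_a t) - M (x_b t)| * |I_b t|
        ≤ (lam * (β ‖x_a 0 - x_b 0‖ t + γ S)) * Ibar := by
          refine mul_le_mul hx hIbt (abs_nonneg _) ?_
          have := (abs_nonneg (M (x_a t) - M (x_b t))).trans hx
          positivity
      _ = Ibar * lam * β ‖x_a 0 - x_b 0‖ t + Ibar * lam * γ S := by ring
  linarith
end

section
/- Let u_a, u_b : [0,∞) → ℝ be measurable and essentially bounded, and let x_a, x_b : [0,∞) → ℝ be continuous with x_i(t) = x_i(0) + ∫_0^t ( −x_i(r) + ∫_0^{min(1,r)} u_i(s) ds ) dr for all t ≥ 0 and i ∈ {a,b} (solutions of the delayed-integrator system ẋ(t) = −x(t) + ∫_0^{min(1,t)} u(s) ds). Then for all t ≥ 0: |x_a(t) − x_b(t)| ≤ e^{−t}|x_a(0) − x_b(0)| + esssup_{s∈[0,t]} |u_a(s) − u_b(s)|; that is, this system is incrementally input-to-state stable. -/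
open MeasureTheory Filter Set

lemma myIntInt {u : ℝ → ℝ} (hu : Measurable u) {C : ℝ}
    (hC : ∀ᵐ s ∂(volume : Measure ℝ), |u s| ≤ C) (a b : ℝ) :
    IntervalIntegrable u volume a b := by
  rw [intervalIntegrable_iff]
  refine Measure.integrableOn_of_bounded (M := C) ?_ hu.aestronglyMeasurable ?_
  · exact (measure_mono uIoc_subset_uIcc (μ := volume)).trans_lt measure_Icc_lt_top |>.ne
  · exact ae_restrict_of_ae (hC.mono fun s h => by simpa [Real.norm_eq_abs] using h)

lemma myEssSupZero (f : ℝ → ℝ) : essSup f (volume.restrict (Icc (0:ℝ) 0)) = 0 := by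
  rw [Measure.restrict_eq_zero.2 (by simp)]
  rw [essSup, ae_zero, limsup_eq]
  have : {a : ℝ | ∀ᶠ n in (⊥ : Filter ℝ), f n ≤ a} = univ := by
    ext a; simp
  rw [this]
  refine Real.sInf_of_not_bddBelow ?_
  rintro ⟨x, hx⟩
  have := hx (mem_univ (x - 1))
  linarith


/-- the delayed-integrator system `ẋ(t) = −x(t) + ∫_0^{min(1,t)} u(s) ds`
is incrementally input-to-state stable. -/
theorem stmt15
    (u_a u_b : ℝ → ℝ)
    (hua : Measurable u_a) (hub : Measurable u_b)
    (hba : ∃ C, ∀ᵐ s ∂volume, |u_a s| ≤ C)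
    (hbb : ∃ C, ∀ᵐ s ∂volume, |u_b s| ≤ C)
    (x_a x_b : ℝ → ℝ)
    (hxa : ContinuousOn x_a (Set.Ici 0)) (hxb : ContinuousOn x_b (Set.Ici 0))
    (hsola : ∀ t ≥ (0:ℝ), x_a t = x_a 0 +
      ∫ r in (0:ℝ)..t, (-x_a r + ∫ s in (0:ℝ)..(min 1 r), u_a s))
    (hsolb : ∀ t ≥ (0:ℝ), x_b t = x_b 0 +
      ∫ r in (0:ℝ)..t, (-x_b r + ∫ s in (0:ℝ)..(min 1 r), u_b s)) :
    ∀ t ≥ (0:ℝ), |x_a t - x_b t| ≤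
      Real.exp (-t) * |x_a 0 - x_b 0| +
      essSupOn (fun s => |u_a s - u_b s|) (Set.Icc 0 t) := by
  obtain ⟨Ca, hCa⟩ := hba
  obtain ⟨Cb, hCb⟩ := hbb
  set v : ℝ → ℝ := fun s => u_a s - u_b s with hv
  set z : ℝ → ℝ := fun x => x_a x - x_b x with hz
  have hvmeas : Measurable v := hua.sub hub
  have hvb : ∀ᵐ s ∂(volume : Measure ℝ), |v s| ≤ Ca + Cb := by
    filter_upwards [hCa, hCb] with s h1 h2
    calc |v s| ≤ |u_a s| + |u_b s| := abs_sub _ _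
    _ ≤ Ca + Cb := add_le_add h1 h2
  have hintv : ∀ a b : ℝ, IntervalIntegrable v volume a b := myIntInt hvmeas hvb
  have hintua : ∀ a b : ℝ, IntervalIntegrable u_a volume a b := myIntInt hua hCa
  have hintub : ∀ a b : ℝ, IntervalIntegrable u_b volume a b := myIntInt hub hCb
  -- the delayed-input functions
  set w : ℝ → ℝ := fun r => ∫ s in (0:ℝ)..(min 1 r), v s with hwdef
  set wa : ℝ → ℝ := fun r => ∫ s in (0:ℝ)..(min 1 r), u_a s with hwa
  set wb : ℝ → ℝ := fun r => ∫ s in (0:ℝ)..(min 1 r), u_b s with hwb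
  have hmincont : Continuous (fun r : ℝ => min 1 r) := continuous_const.min continuous_id
  have hwcont : Continuous w :=
    (intervalIntegral.continuous_primitive hintv 0).comp hmincont
  have hwacont : Continuous wa :=
    (intervalIntegral.continuous_primitive hintua 0).comp hmincont
  have hwbcont : Continuous wb :=
    (intervalIntegral.continuous_primitive hintub 0).comp hmincont
  have hwsub : ∀ r : ℝ, w r = wa r - wb r := fun r =>
    (intervalIntegral.integral_sub (hintua 0 (min 1 r)) (hintub 0 (min 1 r)))
  -- g is the "vector field" for z
  set g : ℝ → ℝ := fun r => -z r + w r with hg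
  have hzcont : ContinuousOn z (Ici 0) := hxa.sub hxb
  have hgcont : ContinuousOn g (Ici 0) :=
    (hzcont.neg).add hwcont.continuousOn
  -- integral equation for z
  have key : ∀ x : ℝ, 0 ≤ x → z x = z 0 + ∫ r in (0:ℝ)..x, g r := by
    intro x hx
    have hIcc : uIcc (0:ℝ) x = Icc 0 x := uIcc_of_le hx
    have hIccsub : Icc (0:ℝ) x ⊆ Ici 0 := fun y hy => hy.1
    have hia : IntervalIntegrable (fun r => -x_a r + wa r) volume 0 x := by
      apply ContinuousOn.intervalIntegrable
      rw [hIcc]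
      exact ((hxa.mono hIccsub).neg).add hwacont.continuousOn
    have hib : IntervalIntegrable (fun r => -x_b r + wb r) volume 0 x := by
      apply ContinuousOn.intervalIntegrable
      rw [hIcc]
      exact ((hxb.mono hIccsub).neg).add hwbcont.continuousOn
    have := intervalIntegral.integral_sub hia hib
    simp only [hz]
    rw [hsola x hx, hsolb x hx]
    have h2 : (∫ r in (0:ℝ)..x, (-x_a r + wa r)) - (∫ r in (0:ℝ)..x, (-x_b r + wb r))
        = ∫ r in (0:ℝ)..x, g r := by
      rw [← this]
      apply intervalIntegral.integral_congr
      intro r _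
      simp only [hg, hz, hwsub r]
      ring
    rw [← h2]; ring
  -- derivative of z at interior points
  have hderivz : ∀ r : ℝ, 0 < r → HasDerivAt z (g r) r := by
    intro r hr
    have hF : HasDerivAt (fun x => ∫ s in (0:ℝ)..x, g s) (g r) r := by
      apply intervalIntegral.integral_hasDerivAt_right
      · apply ContinuousOn.intervalIntegrable
        apply hgcont.mono
        rw [uIcc_of_le hr.le]
        exact fun y hy => hy.1
      · exact (hgcont.mono Ioi_subset_Ici_self).stronglyMeasurableAtFilter isOpen_Ioi r hr
      · exact hgcont.continuousAt (Ici_mem_nhds hr)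
    have heq : z =ᶠ[nhds r] fun x => z 0 + ∫ s in (0:ℝ)..x, g s := by
      filter_upwards [Ioi_mem_nhds hr] with x hx
      exact key x (le_of_lt hx)
    simpa using ((hasDerivAt_const r (z 0)).add hF).congr_of_eventuallyEq heq
  -- main estimate
  intro t ht
  rcases eq_or_lt_of_le ht with h0 | htpos
  · rw [← h0]
    show |z 0| ≤ Real.exp (-0) * |z 0| + essSupOn (fun s => |v s|) (Icc 0 0)
    rw [essSupOn, myEssSupZero]
    simp
  -- t > 0 case
  set M : ℝ := essSupOn (fun s => |v s|) (Icc 0 t) with hM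
  have hbdd : IsBoundedUnder (· ≤ ·) (ae (volume.restrict (Icc (0:ℝ) t)))
      (fun s => |v s|) := ⟨Ca + Cb, by
    rw [eventually_map]
    exact ae_restrict_of_ae hvb⟩
  have haeM : ∀ᵐ s ∂(volume.restrict (Icc (0:ℝ) t)), |v s| ≤ M := ae_le_essSup hbdd
  have hne : NeZero (volume.restrict (Icc (0:ℝ) t)) := by
    refine ⟨?_⟩
    rw [Ne, Measure.restrict_eq_zero]
    simp [Real.volume_Icc]
    linarith
  have hM0 : 0 ≤ M := by
    obtain ⟨s, hs⟩ := haeM.exists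
    exact (abs_nonneg _).trans hs
  -- |w r| ≤ M for r in [0,t]
  have hwbound : ∀ r ∈ Icc (0:ℝ) t, |w r| ≤ M := by
    rintro r ⟨hr0, hrt⟩
    set c := min 1 r with hc
    have hc0 : 0 ≤ c := le_min zero_le_one hr0
    have hct : c ≤ t := (min_le_right 1 r).trans hrt
    have hc1 : c ≤ 1 := min_le_left 1 r
    have h1 : |w r| ≤ ∫ s in (0:ℝ)..c, |v s| :=
      intervalIntegral.abs_integral_le_integral_abs hc0
    have h2 : (∫ s in (0:ℝ)..c, |v s|) ≤ ∫ _ in (0:ℝ)..c, M := by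
      apply intervalIntegral.integral_mono_ae_restrict hc0 ((hintv 0 c).abs)
        intervalIntegrable_const
      exact ae_restrict_of_ae_restrict_of_subset (Icc_subset_Icc le_rfl hct) haeM
    have h3 : (∫ _ in (0:ℝ)..c, M) = c * M := by
      simp [intervalIntegral.integral_const, smul_eq_mul]
    calc |w r| ≤ c * M := by rw [← h3]; exact h1.trans h2
    _ ≤ 1 * M := mul_le_mul_of_nonneg_right hc1 hM0
    _ = M := one_mul M
  -- integrating factor
  set y : ℝ → ℝ := fun x => Real.exp x * z x with hy
  have hderivy : ∀ r ∈ Ioo (0:ℝ) t, HasDerivWithinAt y (Real.exp r * w r) (Ioi r) r := by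
    rintro r ⟨hr0, _⟩
    have h1 : HasDerivAt y (Real.exp r * z r + Real.exp r * g r) r :=
      (Real.hasDerivAt_exp r).mul (hderivz r hr0)
    have h2 : Real.exp r * z r + Real.exp r * g r = Real.exp r * w r := by
      simp only [hg]; ring
    rw [h2] at h1
    exact h1.hasDerivWithinAt
  have hconty : ContinuousOn y (Icc 0 t) :=
    (Real.continuous_exp.continuousOn).mul (hzcont.mono fun s hs => hs.1)
  have hintew : IntervalIntegrable (fun r => Real.exp r * w r) volume 0 t :=
    (Real.continuous_exp.mul hwcont).intervalIntegrable 0 t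
  have hftc : (∫ r in (0:ℝ)..t, Real.exp r * w r) = y t - y 0 :=
    intervalIntegral.integral_eq_sub_of_hasDeriv_right_of_le ht hconty hderivy hintew
  -- bound the integral
  have hintbound : |∫ r in (0:ℝ)..t, Real.exp r * w r| ≤ (Real.exp t - 1) * M := by
    have h1 : |∫ r in (0:ℝ)..t, Real.exp r * w r| ≤ ∫ r in (0:ℝ)..t, |Real.exp r * w r| :=
      intervalIntegral.abs_integral_le_integral_abs ht
    have h2 : (∫ r in (0:ℝ)..t, |Real.exp r * w r|) ≤ ∫ r in (0:ℝ)..t, Real.exp r * M := by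
      apply intervalIntegral.integral_mono_on ht hintew.abs
        ((Real.continuous_exp.mul continuous_const).intervalIntegrable 0 t)
      intro x hx
      rw [abs_mul, abs_of_pos (Real.exp_pos x)]
      exact mul_le_mul_of_nonneg_left (hwbound x hx) (Real.exp_pos x).le
    have h3 : (∫ r in (0:ℝ)..t, Real.exp r * M) = (Real.exp t - 1) * M := by
      rw [intervalIntegral.integral_mul_const, integral_exp]
      simp
    linarith
  -- conclude
  have hyt : y t = y 0 + ∫ r in (0:ℝ)..t, Real.exp r * w r := by rw [hftc]; ring
  have hzt : z t = Real.exp (-t) * y t := by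
    simp only [hy, Real.exp_neg]
    field_simp
  have hy0 : y 0 = z 0 := by simp [hy]
  show |z t| ≤ Real.exp (-t) * |z 0| + M
  rw [hzt, hyt, hy0, abs_mul, abs_of_pos (Real.exp_pos (-t))]
  have h4 : |z 0 + ∫ r in (0:ℝ)..t, Real.exp r * w r| ≤ |z 0| + (Real.exp t - 1) * M :=
    (abs_add_le _ _).trans (by linarith [hintbound])
  have h5 : Real.exp (-t) * |z 0 + ∫ r in (0:ℝ)..t, Real.exp r * w r|
      ≤ Real.exp (-t) * (|z 0| + (Real.exp t - 1) * M) :=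
    mul_le_mul_of_nonneg_left h4 (Real.exp_pos (-t)).le
  have h6 : Real.exp (-t) * (Real.exp t - 1) * M ≤ M := by
    have he : Real.exp (-t) * Real.exp t = 1 := by
      rw [← Real.exp_add]; simp
    have h7 : Real.exp (-t) * (Real.exp t - 1) = 1 - Real.exp (-t) := by
      rw [mul_sub, he]; ring
    rw [h7]
    nlinarith [Real.exp_pos (-t)]
  nlinarith [Real.exp_pos (-t)]
end

section
/- There do not exist β of class KL, γ of class K∞, and a memory kernel w such that for all measurable essentially bounded u_a, u_b : [0,∞) → ℝ and all continuous x_a, x_b : [0,∞) → ℝ satisfying x_i(t) = x_i(0) + ∫_0^t ( −x_i(r) + ∫_0^{min(1,r)} u_i(s) ds ) dr for all t ≥ 0 (i ∈ {a,b}), the inequality |x_a(t) − x_b(t)| ≤ β(|x_a(0) − x_b(0)|, t) + γ(esssup_{s∈[0,t]} w(t−s)|u_a(s) − u_b(s)|) holds for all t ≥ 0. That is, the system ẋ(t) = −x(t) + ∫_0^{min(1,t)} u(s) ds does not have input-to-state fading memory, although it is incrementally input-to-state stable. -/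
open MeasureTheory Filter Set

/-- Explicit solution for input `𝟙_{[0,1]}` and zero initial condition. -/
noncomputable def xaF : ℝ → ℝ := fun t =>
  if t ≤ 1 then t - 1 + Real.exp (-t) else 1 - (Real.exp 1 - 1) * Real.exp (-t)

lemma hb1 (t : ℝ) : HasDerivAt (fun t => t - 1 + Real.exp (-t)) (1 - Real.exp (-t)) t := by
  have h := ((hasDerivAt_id t).sub_const 1).add
    ((Real.hasDerivAt_exp (-t)).comp t ((hasDerivAt_id t).neg))
  refine h.congr_deriv ?_
  ring

lemma hb2 (t : ℝ) : HasDerivAt (fun t => 1 - (Real.exp 1 - 1) * Real.exp (-t))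
    ((Real.exp 1 - 1) * Real.exp (-t)) t := by
  have h := (((Real.hasDerivAt_exp (-t)).comp t ((hasDerivAt_id t).neg)).const_mul
    (Real.exp 1 - 1)).const_sub 1
  refine h.congr_deriv ?_
  ring

lemma deriv_match : 1 - Real.exp (-1) = (Real.exp 1 - 1) * Real.exp (-1) := by
  rw [Real.exp_neg]
  have := Real.exp_pos 1
  field_simp

lemma xaF_deriv (t : ℝ) : HasDerivAt xaF (-xaF t + min 1 t) t := by
  rcases lt_trichotomy t 1 with h | h | h
  · have heq : xaF =ᶠ[nhds t] (fun t => t - 1 + Real.exp (-t)) := by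
      filter_upwards [eventually_lt_nhds h] with y hy
      simp [xaF, le_of_lt hy]
    have hval : -xaF t + min 1 t = 1 - Real.exp (-t) := by
      simp only [xaF, if_pos h.le, min_eq_right h.le]; ring
    rw [hval]
    exact (hb1 t).congr_of_eventuallyEq heq
  · subst h
    have h1 : HasDerivWithinAt xaF (1 - Real.exp (-1)) (Iic 1) 1 := by
      refine ((hb1 1).hasDerivWithinAt).congr (fun y hy => ?_) ?_
      · simp only [xaF, if_pos (mem_Iic.mp hy)]
      · simp [xaF]
    have h2 : HasDerivWithinAt xaF (1 - Real.exp (-1)) (Ici 1) 1 := by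
      rw [deriv_match]
      refine ((hb2 1).hasDerivWithinAt).congr (fun y hy => ?_) ?_
      · rcases eq_or_lt_of_le (mem_Ici.mp hy) with rfl | hlt
        · rw [show xaF 1 = Real.exp (-1) by simp [xaF]]
          rw [show ((1:ℝ) - (Real.exp 1 - 1) * Real.exp (-1)) = Real.exp (-1) by
            have := deriv_match; linarith]
        · simp only [xaF, if_neg (not_le.mpr hlt)]
      · rw [show xaF 1 = Real.exp (-1) by simp [xaF]]
        rw [show ((1:ℝ) - (Real.exp 1 - 1) * Real.exp (-1)) = Real.exp (-1) by
          have := deriv_match; linarith]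
    have h3 := h1.union h2
    rw [Iic_union_Ici] at h3
    have h4 := hasDerivWithinAt_univ.mp h3
    have hx1 : xaF 1 = Real.exp (-1) := by simp [xaF]
    have hval : -xaF 1 + min (1:ℝ) 1 = 1 - Real.exp (-1) := by rw [hx1, min_self]; ring
    rw [hval]
    exact h4
  · have heq : xaF =ᶠ[nhds t] (fun t => 1 - (Real.exp 1 - 1) * Real.exp (-t)) := by
      filter_upwards [eventually_gt_nhds h] with y hy
      simp [xaF, not_le.mpr hy]
    have hval : -xaF t + min 1 t = (Real.exp 1 - 1) * Real.exp (-t) := by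
      simp only [xaF, if_neg (not_le.mpr h), min_eq_left h.le]; ring
    rw [hval]
    exact (hb2 t).congr_of_eventuallyEq heq

lemma xaF_cont : Continuous xaF :=
  continuous_iff_continuousAt.mpr fun t => (xaF_deriv t).continuousAt


/-- the delayed-integrator system `ẋ(t) = −x(t) + ∫_0^{min(1,t)} u(s) ds`
does not have input-to-state fading memory, although it is incrementally
input-to-state stable. -/
theorem stmt16 :
    ¬ ∃ (β : ℝ → ℝ → ℝ) (γ : ℝ → ℝ) (w : ℝ → ℝ),
      ClassKL β ∧ ClassKInf γ ∧ MemoryKernel w ∧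
      ∀ u_a u_b : ℝ → ℝ, Measurable u_a → Measurable u_b →
        (∃ C, ∀ᵐ s ∂volume, |u_a s| ≤ C) → (∃ C, ∀ᵐ s ∂volume, |u_b s| ≤ C) →
        ∀ x_a x_b : ℝ → ℝ,
          ContinuousOn x_a (Set.Ici 0) → ContinuousOn x_b (Set.Ici 0) →
          (∀ t ≥ (0:ℝ), x_a t = x_a 0 +
            ∫ r in (0:ℝ)..t, (-x_a r + ∫ s in (0:ℝ)..(min 1 r), u_a s)) →
          (∀ t ≥ (0:ℝ), x_b t = x_b 0 +
            ∫ r in (0:ℝ)..t, (-x_b r + ∫ s in (0:ℝ)..(min 1 r), u_b s)) →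
          ∀ t ≥ (0:ℝ), |x_a t - x_b t| ≤ β |x_a 0 - x_b 0| t +
            γ (essSupOn (fun s => w (t - s) * |u_a s - u_b s|) (Set.Icc 0 t)) := by
  rintro ⟨β, γ, w, hβ, hγ, hw, hP⟩
  -- the counterexample input
  set u_a : ℝ → ℝ := (Set.Icc (0:ℝ) 1).indicator (fun _ => 1) with hu_a
  have hua01 : ∀ s, u_a s = 0 ∨ u_a s = 1 := by
    intro s
    by_cases h : s ∈ Set.Icc (0:ℝ) 1 <;> simp [hu_a, h]
  have hua_bd : ∀ s, |u_a s| ≤ 1 := by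
    intro s; rcases hua01 s with h | h <;> rw [h] <;> norm_num
  have hua_meas : Measurable u_a := measurable_const.indicator measurableSet_Icc
  -- x_a := xaF satisfies the integral equation
  have hxa : ∀ t ≥ (0:ℝ), xaF t = xaF 0 +
      ∫ r in (0:ℝ)..t, (-xaF r + ∫ s in (0:ℝ)..(min 1 r), u_a s) := by
    intro t ht
    have hcong : ∀ r ∈ Set.uIcc (0:ℝ) t,
        (-xaF r + ∫ s in (0:ℝ)..(min 1 r), u_a s) = -xaF r + min 1 r := by
      intro r hr
      rw [Set.uIcc_of_le ht] at hr
      have hr0 : 0 ≤ r := hr.1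
      have hm0 : 0 ≤ min 1 r := le_min zero_le_one hr0
      have hm1 : min 1 r ≤ 1 := min_le_left _ _
      have hinner : (∫ s in (0:ℝ)..(min 1 r), u_a s) = min 1 r := by
        have : ∫ s in (0:ℝ)..(min 1 r), u_a s = ∫ s in (0:ℝ)..(min 1 r), (1:ℝ) := by
          apply intervalIntegral.integral_congr
          intro s hs
          rw [Set.uIcc_of_le hm0] at hs
          have : s ∈ Set.Icc (0:ℝ) 1 := ⟨hs.1, hs.2.trans hm1⟩
          simp [hu_a, this]
        rw [this, intervalIntegral.integral_const]
        simp
      rw [hinner]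
    rw [intervalIntegral.integral_congr hcong]
    have hFTC := intervalIntegral.integral_eq_sub_of_hasDerivAt
      (f := xaF) (f' := fun r => -xaF r + min 1 r) (a := (0:ℝ)) (b := t)
      (fun r _ => xaF_deriv r)
      ((xaF_cont.neg.add (continuous_const.min continuous_id)).intervalIntegrable 0 t)
    rw [hFTC]
    ring
  -- apply the assumed estimate
  have H := hP u_a (fun _ => 0) hua_meas measurable_const
    ⟨1, Filter.Eventually.of_forall hua_bd⟩
    ⟨0, Filter.Eventually.of_forall (by simp)⟩
    xaF (fun _ => 0) xaF_cont.continuousOn continuousOn_const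
    hxa (by intro t ht; simp)
  have hxa0 : xaF 0 = 0 := by simp [xaF]
  -- for t ≥ 1 : |xaF t| ≤ γ (w (t-1))
  have key : ∀ t ≥ (1:ℝ), |xaF t| ≤ γ (w (t - 1)) := by
    intro t ht1
    have ht0 : (0:ℝ) ≤ t := by linarith
    have Ht := H t ht0
    rw [hxa0] at Ht
    simp only [sub_zero, abs_zero] at Ht
    rw [(hβ.2.1 t ht0).2] at Ht
    set f : ℝ → ℝ := fun s => w (t - s) * |u_a s| with hf
    have hwt1_mem : t - 1 ∈ Set.Ici (0:ℝ) := by simp; linarith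
    have hwt1_nonneg : 0 ≤ w (t - 1) := (hw.2.2.1 (t - 1) (by linarith)).1
    have hub : ∀ s, f s ≤ w (t - 1) := by
      intro s
      by_cases hs : s ∈ Set.Icc (0:ℝ) 1
      · have : u_a s = 1 := by simp [hu_a, hs]
        rw [hf]
        simp only [this, abs_one, mul_one]
        exact hw.2.1 hwt1_mem (by simp; linarith [hs.2]) (by linarith [hs.2])
      · have : u_a s = 0 := by simp [hu_a, hs]
        rw [hf]; simp only [this, abs_zero, mul_zero]
        exact hwt1_nonneg
    have hlb : ∀ s, 0 ≤ f s := by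
      intro s
      by_cases hs : s ∈ Set.Icc (0:ℝ) 1
      · exact mul_nonneg ((hw.2.2.1 (t - s) (by linarith [hs.2])).1) (abs_nonneg _)
      · have : u_a s = 0 := by simp [hu_a, hs]
        rw [hf]; simp [this]
    -- the restricted measure is nonzero
    have hμ : volume.restrict (Set.Icc (0:ℝ) t) ≠ 0 := by
      rw [Ne, Measure.restrict_eq_zero, Real.volume_Icc]
      simp only [ENNReal.ofReal_eq_zero, not_le]
      linarith
    haveI : (ae (volume.restrict (Set.Icc (0:ℝ) t))).NeBot := ae_neBot.mpr hμ
    have hbdd : IsBoundedUnder (· ≤ ·) (ae (volume.restrict (Set.Icc (0:ℝ) t))) f :=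
      ⟨w (t - 1), Filter.eventually_map.mpr (Filter.Eventually.of_forall hub)⟩
    have hE_le : essSupOn f (Set.Icc 0 t) ≤ w (t - 1) := by
      apply Filter.limsup_le_of_le
        (Filter.isCoboundedUnder_le_of_le _ hlb)
        (Filter.Eventually.of_forall hub)
    have hE_nonneg : 0 ≤ essSupOn f (Set.Icc 0 t) := by
      apply Filter.le_limsup_of_frequently_le
        ((Filter.Eventually.of_forall hlb).frequently) hbdd
    calc |xaF t| ≤ 0 + γ (essSupOn f (Set.Icc 0 t)) := Ht
      _ = γ (essSupOn f (Set.Icc 0 t)) := by rw [zero_add]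
      _ ≤ γ (w (t - 1)) :=
          hγ.2.1.monotoneOn hE_nonneg hwt1_nonneg hE_le
  -- limits: |xaF t| → 1 while γ (w (t-1)) → 0, contradiction
  have hB : Tendsto xaF atTop (nhds 1) := by
    have h1 : Tendsto (fun t : ℝ => 1 - (Real.exp 1 - 1) * Real.exp (-t)) atTop
        (nhds (1 - (Real.exp 1 - 1) * 0)) :=
      tendsto_const_nhds.sub (tendsto_const_nhds.mul Real.tendsto_exp_neg_atTop_nhds_zero)
    rw [mul_zero, sub_zero] at h1
    apply h1.congr'
    filter_upwards [eventually_gt_atTop (1:ℝ)] with y hy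
    simp [xaF, not_le.mpr hy]
  have hwlim : Tendsto (fun t : ℝ => w (t - 1)) atTop (nhds 0) :=
    hw.2.2.2.comp (tendsto_atTop_add_const_right atTop (-1) tendsto_id)
  have hA : Tendsto (fun t : ℝ => γ (w (t - 1))) atTop (nhds 0) := by
    have hγc : ContinuousWithinAt γ (Set.Ici 0) 0 := hγ.1 0 (by simp)
    have hwithin : Tendsto (fun t : ℝ => w (t - 1)) atTop (nhdsWithin 0 (Set.Ici 0)) := by
      rw [tendsto_nhdsWithin_iff]
      refine ⟨hwlim, ?_⟩
      filter_upwards [eventually_ge_atTop (1:ℝ)] with y hy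
      exact (hw.2.2.1 (y - 1) (by linarith)).1
    have := hγc.tendsto.comp hwithin
    rwa [hγ.2.2.1] at this
  have hcontra : (1:ℝ) ≤ 0 := by
    have habs : Tendsto (fun t => |xaF t|) atTop (nhds |1|) := hB.abs
    rw [abs_one] at habs
    refine le_of_tendsto_of_tendsto habs hA ?_
    filter_upwards [eventually_ge_atTop (1:ℝ)] with y hy
    exact key y hy
  linarith
end

section
/- Let u_a, u_b : [0,∞) → ℝ be measurable and essentially bounded, and let x_a, x_b : [0,∞) → ℝ be continuous with x_i(t) = x_i(0) + ∫_0^t (u_i(s) − x_i(s))/(s+1) ds for all t ≥ 0 and i ∈ {a,b} (solutions of the time-varying system ẋ(t) = (−x(t) + u(t))/(t+1)). Then for all t ≥ 0: x_a(t) − x_b(t) = ( x_a(0) − x_b(0) + ∫_0^t (u_a(s) − u_b(s)) ds )/(t+1), and consequently |x_a(t) − x_b(t)| ≤ |x_a(0) − x_b(0)|/(t+1) + esssup_{s∈[0,t]} |u_a(s) − u_b(s)|; that is, this system is incrementally input-to-state stable. -/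
open MeasureTheory Filter Set

lemma tri (g : ℝ → ℝ) (hg : Measurable g) {t C : ℝ} (ht : 0 ≤ t)
    (hC : ∀ᵐ r ∂(volume.restrict (Ioc (0:ℝ) t)), |g r| ≤ C) :
    ∫ s in (0:ℝ)..t, (∫ r in (0:ℝ)..s, g r) = ∫ r in (0:ℝ)..t, (t - r) * g r := by
  set μ := volume.restrict (Ioc (0:ℝ) t) with hμ
  haveI : Fact (volume (Ioc (0:ℝ) t) < ⊤) := ⟨measure_Ioc_lt_top⟩
  set f : ℝ × ℝ → ℝ := fun p => if p.2 ≤ p.1 then g p.2 else 0 with hf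
  have hfm : Measurable f :=
    Measurable.ite (measurableSet_le measurable_snd measurable_fst)
      (hg.comp measurable_snd) measurable_const
  have hA : μ {r | ¬ |g r| ≤ C} = 0 := hC
  have hAm : MeasurableSet {r : ℝ | ¬ |g r| ≤ C} :=
    (measurableSet_le hg.abs measurable_const).compl
  have hnull : (μ.prod μ) (univ ×ˢ {r : ℝ | ¬ |g r| ≤ C}) = 0 := by
    rw [Measure.prod_prod, hA, mul_zero]
  have hbad : ∀ᵐ p ∂(μ.prod μ), ‖f p‖ ≤ |C| := by
    rw [ae_iff]
    refine measure_mono_null (fun p hp => ?_) hnull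
    show p ∈ (univ ×ˢ {r | ¬ |g r| ≤ C})
    simp only [mem_setOf_eq, mem_prod, mem_univ, true_and]
    intro hgood
    apply hp
    show ‖f p‖ ≤ |C|
    rw [Real.norm_eq_abs, hf]
    by_cases h : p.2 ≤ p.1 <;> simp [h]
    · exact hgood.trans (le_abs_self C)
  have hfint : Integrable f (μ.prod μ) :=
    Integrable.mono' (integrable_const |C|) hfm.aestronglyMeasurable hbad
  have swap := integral_integral_swap (f := fun s r => f (s, r)) (μ := μ) (ν := μ) hfint
  have inner1 : ∀ s ∈ Ioc (0:ℝ) t, (∫ r, f (s, r) ∂μ) = ∫ r in (0:ℝ)..s, g r := by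
    intro s hs
    rw [intervalIntegral.integral_of_le hs.1.le]
    have heq : (fun r => f (s, r)) = (Iic s).indicator g := by
      ext r
      by_cases h : r ≤ s <;> simp [hf, Set.indicator_apply, h]
    have hset : Iic s ∩ Ioc (0:ℝ) t = Ioc 0 s := by
      ext x
      simp only [mem_inter_iff, mem_Iic, mem_Ioc]
      exact ⟨fun ⟨h1, h2, h3⟩ => ⟨h2, h1⟩, fun ⟨h1, h2⟩ => ⟨h2, h1, h2.trans hs.2⟩⟩
    rw [heq, integral_indicator measurableSet_Iic, hμ,
      Measure.restrict_restrict measurableSet_Iic, hset]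
  have inner2 : ∀ r ∈ Ioc (0:ℝ) t, (∫ s, f (s, r) ∂μ) = (t - r) * g r := by
    intro r hr
    have heq : (fun s => f (s, r)) = (Ici r).indicator (fun _ => g r) := by
      ext s
      by_cases h : r ≤ s <;> simp [hf, Set.indicator_apply, h]
    rw [heq, integral_indicator measurableSet_Ici, hμ,
      Measure.restrict_restrict measurableSet_Ici]
    have hset : Ici r ∩ Ioc (0:ℝ) t = Icc r t := by
      ext x
      simp only [mem_inter_iff, mem_Ici, mem_Ioc, mem_Icc]
      exact ⟨fun ⟨h1, h2, h3⟩ => ⟨h1, h3⟩, fun ⟨h1, h2⟩ => ⟨h1, hr.1.trans_le h1, h2⟩⟩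
    rw [hset, setIntegral_const, Real.volume_real_Icc_of_le hr.2,
      smul_eq_mul]
  rw [intervalIntegral.integral_of_le ht, intervalIntegral.integral_of_le ht]
  calc ∫ s in Ioc (0:ℝ) t, (∫ r in (0:ℝ)..s, g r)
      = ∫ s, (∫ r, f (s, r) ∂μ) ∂μ := (setIntegral_congr_fun measurableSet_Ioc
        (fun s hs => (inner1 s hs).symm))
    _ = ∫ r, (∫ s, f (s, r) ∂μ) ∂μ := swap
    _ = ∫ r in Ioc (0:ℝ) t, (t - r) * g r := setIntegral_congr_fun measurableSet_Ioc inner2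

lemma aux (u x : ℝ → ℝ) (hu : Measurable u) (hx : Continuous x) {C t : ℝ} (ht : 0 ≤ t)
    (hC : ∀ᵐ s ∂(volume : Measure ℝ), |u s| ≤ C) :
    ∃ C', (∀ᵐ r ∂(volume.restrict (Ioc (0:ℝ) t)), |(u r - x r) / (r + 1)| ≤ C') ∧
      IntegrableOn (fun r => (u r - x r) / (r + 1)) (Ioc (0:ℝ) t) volume := by
  obtain ⟨K, hK⟩ := (isCompact_Icc (a := (0:ℝ)) (b := t)).exists_bound_of_continuousOn
    hx.continuousOn
  have hm : Measurable (fun r => (u r - x r) / (r + 1)) :=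
    (hu.sub hx.measurable).div ((continuous_id.add continuous_const).measurable)
  have hbd : ∀ᵐ r ∂(volume.restrict (Ioc (0:ℝ) t)), |(u r - x r) / (r + 1)| ≤ C + K := by
    filter_upwards [ae_restrict_of_ae hC, ae_restrict_mem measurableSet_Ioc] with r hr hrm
    have hr1 : (1:ℝ) ≤ r + 1 := by linarith [hrm.1]
    have hKx : |x r| ≤ K := by
      simpa [Real.norm_eq_abs] using hK r ⟨hrm.1.le, hrm.2⟩
    have habs : |(u r - x r) / (r + 1)| = |u r - x r| / (r + 1) := by
      rw [abs_div, abs_of_pos (by linarith : (0:ℝ) < r + 1)]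
    rw [habs]
    have h2 : |u r - x r| ≤ C + K :=
      (abs_sub _ _).trans (add_le_add hr hKx)
    calc |u r - x r| / (r + 1) ≤ |u r - x r| / 1 :=
          div_le_div_of_nonneg_left (abs_nonneg _) one_pos hr1
      _ ≤ C + K := by simpa using h2
  haveI : Fact (volume (Ioc (0:ℝ) t) < ⊤) := ⟨measure_Ioc_lt_top⟩
  exact ⟨C + K, hbd, Integrable.mono' (integrable_const (C + K))
    hm.aestronglyMeasurable (by simpa only [Real.norm_eq_abs] using hbd)⟩

/-- explicit incremental solution formula for the time-varying system
`ẋ(t) = (−x(t) + u(t))/(t+1)`, and the resulting incremental input-to-state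
stability estimate. -/
theorem stmt18
    (u_a u_b : ℝ → ℝ)
    (hua : Measurable u_a) (hub : Measurable u_b)
    (hba : ∃ C, ∀ᵐ s ∂volume, |u_a s| ≤ C)
    (hbb : ∃ C, ∀ᵐ s ∂volume, |u_b s| ≤ C)
    (x_a x_b : ℝ → ℝ)
    (hxa : ContinuousOn x_a (Set.Ici 0)) (hxb : ContinuousOn x_b (Set.Ici 0))
    (hsola : ∀ t ≥ (0:ℝ), x_a t = x_a 0 + ∫ s in (0:ℝ)..t, (u_a s - x_a s) / (s + 1))
    (hsolb : ∀ t ≥ (0:ℝ), x_b t = x_b 0 + ∫ s in (0:ℝ)..t, (u_b s - x_b s) / (s + 1)) :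
    ∀ t ≥ (0:ℝ),
      x_a t - x_b t = (x_a 0 - x_b 0 + ∫ s in (0:ℝ)..t, (u_a s - u_b s)) / (t + 1) ∧
      |x_a t - x_b t| ≤ |x_a 0 - x_b 0| / (t + 1) +
        essSupOn (fun s => |u_a s - u_b s|) (Set.Icc 0 t) := by
  intro t ht
  obtain ⟨Ca, hCa⟩ := hba
  obtain ⟨Cb, hCb⟩ := hbb
  have ht1 : (0:ℝ) < t + 1 := by linarith
  -- globally continuous modifications of x_a, x_b
  set xA : ℝ → ℝ := fun s => x_a (max s 0) with hxA
  set xB : ℝ → ℝ := fun s => x_b (max s 0) with hxB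
  have hxAc : Continuous xA :=
    hxa.comp_continuous (continuous_id.max continuous_const) (fun x => le_max_right x 0)
  have hxBc : Continuous xB :=
    hxb.comp_continuous (continuous_id.max continuous_const) (fun x => le_max_right x 0)
  have hxAeq : ∀ s : ℝ, 0 ≤ s → xA s = x_a s := fun s hs => by
    simp [hxA, max_eq_left hs]
  have hxBeq : ∀ s : ℝ, 0 ≤ s → xB s = x_b s := fun s hs => by
    simp [hxB, max_eq_left hs]
  have hd : Continuous (fun s => xA s - xB s) := hxAc.sub hxBc
  have hvC : ∀ᵐ s ∂(volume : Measure ℝ), |u_a s - u_b s| ≤ Ca + Cb := by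
    filter_upwards [hCa, hCb] with s h1 h2
    exact (abs_sub _ _).trans (add_le_add h1 h2)
  -- g is the integrand of the difference equation
  set g : ℝ → ℝ := fun s => ((u_a s - u_b s) - (xA s - xB s)) / (s + 1) with hg
  have hgm : Measurable g :=
    ((hua.sub hub).sub hd.measurable).div ((continuous_id.add continuous_const).measurable)
  obtain ⟨CG, hCG, hgint⟩ := aux (fun s => u_a s - u_b s) (fun s => xA s - xB s)
    (hua.sub hub) hd ht hvC
  obtain ⟨CA, hCA', hgAint⟩ := aux u_a xA hua hxAc ht hCa
  obtain ⟨CB, hCB', hgBint⟩ := aux u_b xB hub hxBc ht hCb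
  -- solution identity for the difference
  have hy : ∀ s, 0 ≤ s → s ≤ t →
      x_a s - x_b s = (x_a 0 - x_b 0) + ∫ r in (0:ℝ)..s, g r := by
    intro s hs hst
    have huIcc : uIcc (0:ℝ) s = Icc 0 s := uIcc_of_le hs
    have e1 : (∫ r in (0:ℝ)..s, (u_a r - x_a r) / (r + 1)) =
        ∫ r in (0:ℝ)..s, (u_a r - xA r) / (r + 1) := by
      refine intervalIntegral.integral_congr (fun r hr => ?_)
      rw [huIcc] at hr
      rw [hxAeq r hr.1]
    have e2 : (∫ r in (0:ℝ)..s, (u_b r - x_b r) / (r + 1)) =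
        ∫ r in (0:ℝ)..s, (u_b r - xB r) / (r + 1) := by
      refine intervalIntegral.integral_congr (fun r hr => ?_)
      rw [huIcc] at hr
      rw [hxBeq r hr.1]
    have iA : IntervalIntegrable (fun r => (u_a r - xA r) / (r + 1)) volume 0 s :=
      (intervalIntegrable_iff_integrableOn_Ioc_of_le hs).mpr
        (hgAint.mono_set (Ioc_subset_Ioc_right hst))
    have iB : IntervalIntegrable (fun r => (u_b r - xB r) / (r + 1)) volume 0 s :=
      (intervalIntegrable_iff_integrableOn_Ioc_of_le hs).mpr
        (hgBint.mono_set (Ioc_subset_Ioc_right hst))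
    have e3 : (∫ r in (0:ℝ)..s, ((u_a r - xA r) / (r + 1) - (u_b r - xB r) / (r + 1))) =
        ∫ r in (0:ℝ)..s, g r := by
      refine intervalIntegral.integral_congr (fun r hr => ?_)
      rw [div_sub_div_same, hg]
      congr 1
      ring
    have e4 : ((∫ r in (0:ℝ)..s, (u_a r - xA r) / (r + 1)) -
        ∫ r in (0:ℝ)..s, (u_b r - xB r) / (r + 1)) = ∫ r in (0:ℝ)..s, g r :=
      (intervalIntegral.integral_sub iA iB).symm.trans e3
    rw [hsola s hs, hsolb s hs, e1, e2]
    linarith [e4]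
  -- the key algebraic identity via the triangle lemma
  have htri := tri g hgm ht hCG
  haveI : Fact (volume (Ioc (0:ℝ) t) < ⊤) := ⟨measure_Ioc_lt_top⟩
  have hvint : IntervalIntegrable (fun s => u_a s - u_b s) volume 0 t := by
    refine (intervalIntegrable_iff_integrableOn_Ioc_of_le ht).mpr ?_
    exact Integrable.mono' (integrable_const (Ca + Cb))
      ((hua.sub hub).aestronglyMeasurable)
      (by simpa only [Real.norm_eq_abs] using ae_restrict_of_ae hvC)
  have hdint : IntervalIntegrable (fun s => xA s - xB s) volume 0 t :=
    hd.intervalIntegrable 0 t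
  have hi1 : IntervalIntegrable (fun r => (r + 1) * g r) volume 0 t := by
    refine (intervalIntegrable_iff_integrableOn_Ioc_of_le ht).mpr ?_
    refine Integrable.mono' (integrable_const ((t + 1) * |CG|))
      (((continuous_id.add continuous_const).measurable.mul hgm).aestronglyMeasurable) ?_
    filter_upwards [hCG, ae_restrict_mem measurableSet_Ioc] with r h1 h2
    rw [Real.norm_eq_abs, abs_mul, abs_of_pos (by linarith [h2.1] : (0:ℝ) < r + 1)]
    exact mul_le_mul (by linarith [h2.2]) (h1.trans (le_abs_self _)) (abs_nonneg _)
      (by linarith)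
  have hi2 : IntervalIntegrable (fun r => (t - r) * g r) volume 0 t := by
    refine (intervalIntegrable_iff_integrableOn_Ioc_of_le ht).mpr ?_
    refine Integrable.mono' (integrable_const ((t + 1) * |CG|))
      (((continuous_const.sub continuous_id).measurable.mul hgm).aestronglyMeasurable) ?_
    filter_upwards [hCG, ae_restrict_mem measurableSet_Ioc] with r h1 h2
    rw [Real.norm_eq_abs, abs_mul, abs_of_nonneg (by linarith [h2.2] : (0:ℝ) ≤ t - r)]
    exact mul_le_mul (by linarith [h2.1]) (h1.trans (le_abs_self _)) (abs_nonneg _)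
      (by linarith)
  have eA : (∫ r in (0:ℝ)..t, (r + 1) * g r)
      = (∫ s in (0:ℝ)..t, (u_a s - u_b s)) - ∫ s in (0:ℝ)..t, (xA s - xB s) := by
    rw [← intervalIntegral.integral_sub hvint hdint]
    refine intervalIntegral.integral_congr (fun r hr => ?_)
    rw [uIcc_of_le ht] at hr
    have hr1 : (r:ℝ) + 1 ≠ 0 := by linarith [hr.1]
    rw [hg]
    rw [mul_comm, div_mul_cancel₀ _ hr1]
  have eW : (∫ s in (0:ℝ)..t, (∫ r in (0:ℝ)..s, g r))
      = (∫ s in (0:ℝ)..t, (xA s - xB s)) - t * (x_a 0 - x_b 0) := by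
    have e5 : (∫ s in (0:ℝ)..t, (∫ r in (0:ℝ)..s, g r))
        = ∫ s in (0:ℝ)..t, ((xA s - xB s) - (x_a 0 - x_b 0)) := by
      refine intervalIntegral.integral_congr (fun s hs => ?_)
      rw [uIcc_of_le ht] at hs
      have h6 := hy s hs.1 hs.2
      rw [hxAeq s hs.1, hxBeq s hs.1]
      linarith [h6]
    rw [e5, intervalIntegral.integral_sub hdint (intervalIntegrable_const),
      intervalIntegral.integral_const]
    simp [smul_eq_mul]
  have hwt : (t + 1) * (∫ r in (0:ℝ)..t, g r)
      = (∫ s in (0:ℝ)..t, (u_a s - u_b s)) - t * (x_a 0 - x_b 0) := by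
    have h1 : (t + 1) * (∫ r in (0:ℝ)..t, g r) = ∫ r in (0:ℝ)..t, (t + 1) * g r :=
      (intervalIntegral.integral_const_mul _ _).symm
    have h2 : (∫ r in (0:ℝ)..t, (t + 1) * g r)
        = (∫ r in (0:ℝ)..t, (r + 1) * g r) + ∫ r in (0:ℝ)..t, (t - r) * g r := by
      rw [← intervalIntegral.integral_add hi1 hi2]
      refine intervalIntegral.integral_congr (fun r hr => ?_)
      ring
    rw [h1, h2, ← htri, eA, eW]
    ring
  have keyA : x_a t - x_b t
      = (x_a 0 - x_b 0 + ∫ s in (0:ℝ)..t, (u_a s - u_b s)) / (t + 1) := by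
    rw [eq_div_iff (ne_of_gt ht1)]
    have h7 := hy t ht le_rfl
    rw [h7]
    linear_combination hwt
  refine ⟨keyA, ?_⟩
  rcases eq_or_lt_of_le ht with h0 | h0
  · -- t = 0
    have hM : essSupOn (fun s => |u_a s - u_b s|) (Icc 0 t) = 0 := by
      rw [essSupOn]
      have hz : (volume.restrict (Icc (0:ℝ) t)) = 0 := by
        rw [Measure.restrict_eq_zero, ← h0]
        simp
      rw [hz]
      show Filter.limsup _ (ae (0 : Measure ℝ)) = 0
      rw [ae_zero, Filter.limsup_eq]
      have hu : {a : ℝ | ∀ᶠ n in (⊥ : Filter ℝ), |u_a n - u_b n| ≤ a} = univ := by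
        ext a; simp
      rw [hu, csInf_of_not_bddBelow (by
        intro hb
        exact not_bddBelow_univ hb), Real.sInf_empty]
    rw [hM, keyA, ← h0]
    simp
  · -- 0 < t
    have hμ'ne : volume.restrict (Icc (0:ℝ) t) ≠ 0 := by
      rw [Ne, Measure.restrict_eq_zero, Real.volume_Icc]
      simp only [ENNReal.ofReal_eq_zero, sub_zero]
      push_neg
      linarith
    have hvC' : ∀ᵐ s ∂(volume.restrict (Icc (0:ℝ) t)), |u_a s - u_b s| ≤ Ca + Cb :=
      ae_restrict_of_ae hvC
    have hbdd : IsBoundedUnder (· ≤ ·) (ae (volume.restrict (Icc (0:ℝ) t)))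
        (fun s => |u_a s - u_b s|) := ⟨Ca + Cb, eventually_map.2 hvC'⟩
    have hMle : ∀ᵐ s ∂(volume.restrict (Icc (0:ℝ) t)), |u_a s - u_b s| ≤
        essSupOn (fun s => |u_a s - u_b s|) (Icc 0 t) := ae_le_essSup hbdd
    haveI : (ae (volume.restrict (Icc (0:ℝ) t))).NeBot := ae_neBot.mpr hμ'ne
    have hM0 : 0 ≤ essSupOn (fun s => |u_a s - u_b s|) (Icc 0 t) :=
      le_limsup_of_frequently_le (Frequently.of_forall (fun s => abs_nonneg _)) hbdd
    set M := essSupOn (fun s => |u_a s - u_b s|) (Icc 0 t) with hMdef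
    have hIv : |∫ s in (0:ℝ)..t, (u_a s - u_b s)| ≤ t * M := by
      rw [intervalIntegral.integral_of_le ht]
      have h1 : |∫ s in Ioc (0:ℝ) t, (u_a s - u_b s)|
          ≤ ∫ s in Ioc (0:ℝ) t, |u_a s - u_b s| := by
        simpa only [Real.norm_eq_abs] using
          norm_integral_le_integral_norm (μ := volume.restrict (Ioc (0:ℝ) t))
            (fun s => u_a s - u_b s)
      have h2 : (∫ s in Ioc (0:ℝ) t, |u_a s - u_b s|) ≤ ∫ _s in Ioc (0:ℝ) t, M := by
        refine integral_mono_ae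
          ((intervalIntegrable_iff_integrableOn_Ioc_of_le ht).mp hvint).abs
          (integrable_const M) ?_
        exact ae_restrict_of_ae_restrict_of_subset Ioc_subset_Icc_self hMle
      have h3 : (∫ _s in Ioc (0:ℝ) t, M) = t * M := by
        rw [setIntegral_const, Real.volume_real_Ioc_of_le ht, sub_zero,
          smul_eq_mul]
      linarith
    rw [keyA, abs_div, abs_of_pos ht1]
    have h4 : |x_a 0 - x_b 0 + ∫ s in (0:ℝ)..t, (u_a s - u_b s)|
        ≤ |x_a 0 - x_b 0| + t * M := (abs_add_le _ _).trans (by linarith)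
    have h5 : (|x_a 0 - x_b 0| + t * M) / (t + 1)
        = |x_a 0 - x_b 0| / (t + 1) + t * M / (t + 1) := add_div _ _ _
    have h6 : t * M / (t + 1) ≤ M := by
      rw [div_le_iff₀ ht1]
      nlinarith
    calc |x_a 0 - x_b 0 + ∫ s in (0:ℝ)..t, (u_a s - u_b s)| / (t + 1)
        ≤ (|x_a 0 - x_b 0| + t * M) / (t + 1) := by gcongr
      _ = |x_a 0 - x_b 0| / (t + 1) + t * M / (t + 1) := h5
      _ ≤ |x_a 0 - x_b 0| / (t + 1) + M := by linarith
end

section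
/- There do not exist β of class KL, γ of class K∞, and a memory kernel w such that for all measurable essentially bounded u_a, u_b : [0,∞) → ℝ and all continuous x_a, x_b : [0,∞) → ℝ satisfying x_i(t) = x_i(0) + ∫_0^t (u_i(s) − x_i(s))/(s+1) ds for all t ≥ 0 (i ∈ {a,b}), the inequality |x_a(t) − x_b(t)| ≤ β(|x_a(0) − x_b(0)|, t) + γ(esssup_{s∈[0,t]} w(t−s)|u_a(s) − u_b(s)|) holds for all t ≥ 0. That is, the time-varying system ẋ(t) = (−x(t) + u(t))/(t+1) does not have input-to-state fading memory, although it is incrementally input-to-state stable. -/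
open MeasureTheory Filter Set

set_option maxHeartbeats 1000000

/-- the time-varying system `ẋ(t) = (−x(t) + u(t))/(t+1)`
does not have input-to-state fading memory, although it is incrementally
input-to-state stable. -/
theorem stmt19 :
    ¬ ∃ (β : ℝ → ℝ → ℝ) (γ : ℝ → ℝ) (w : ℝ → ℝ),
      ClassKL β ∧ ClassKInf γ ∧ MemoryKernel w ∧
      ∀ u_a u_b : ℝ → ℝ, Measurable u_a → Measurable u_b →
        (∃ C, ∀ᵐ s ∂volume, |u_a s| ≤ C) → (∃ C, ∀ᵐ s ∂volume, |u_b s| ≤ C) →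
        ∀ x_a x_b : ℝ → ℝ,
          ContinuousOn x_a (Set.Ici 0) → ContinuousOn x_b (Set.Ici 0) →
          (∀ t ≥ (0:ℝ), x_a t = x_a 0 + ∫ s in (0:ℝ)..t, (u_a s - x_a s) / (s + 1)) →
          (∀ t ≥ (0:ℝ), x_b t = x_b 0 + ∫ s in (0:ℝ)..t, (u_b s - x_b s) / (s + 1)) →
          ∀ t ≥ (0:ℝ), |x_a t - x_b t| ≤ β |x_a 0 - x_b 0| t +
            γ (essSupOn (fun s => w (t - s) * |u_a s - u_b s|) (Set.Icc 0 t)) := by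
  rintro ⟨β, γ, w, hβ, hγ, hw, H⟩
  obtain ⟨γcont, γmono, γ0, γnn, -⟩ := hγ
  obtain ⟨wcont, wanti, wbd, wtend⟩ := hw
  -- γ (w T) → 0 as T → ∞
  have hγw : Tendsto (fun T => γ (w T)) atTop (nhds 0) := by
    have h1 : Tendsto w atTop (nhdsWithin 0 (Set.Ici 0)) := by
      refine tendsto_nhdsWithin_iff.2 ⟨wtend, ?_⟩
      filter_upwards [eventually_ge_atTop (0:ℝ)] with t ht
      exact (wbd t ht).1
    have h2 := (γcont 0 Set.self_mem_Ici).tendsto.comp h1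
    rwa [γ0] at h2
  obtain ⟨T, hTγ, hT1⟩ :=
    ((hγw.eventually_lt_const (show (0:ℝ) < 1/3 by norm_num)).and
      (eventually_ge_atTop (1:ℝ))).exists
  have hT0 : (0:ℝ) < T := by linarith
  set u : ℝ → ℝ := fun s => if s < T then 1 else 0 with hu
  set x : ℝ → ℝ := fun t => min t T / (t + 1) with hxdef
  have hx0 : x 0 = 0 := by simp [hxdef, min_eq_left hT0.le]
  have hxcont : ContinuousOn x (Set.Ici 0) := by
    apply ContinuousOn.div
    · exact (continuous_id.min continuous_const).continuousOn
    · exact (continuous_id.add continuous_const).continuousOn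
    · intro t ht; simp only [mem_Ici] at ht; intro h; linarith
  have humeas : Measurable u :=
    Measurable.ite measurableSet_Iio measurable_const measurable_const
  have hubd : ∀ s, |u s| ≤ 1 := by
    intro s; by_cases h : s < T <;> simp [hu, h]
  -- the integral equation for x
  have hxeq : ∀ t ≥ (0:ℝ), x t = x 0 + ∫ s in (0:ℝ)..t, (u s - x s) / (s + 1) := by
    intro t ht
    have hcont : ContinuousOn x (Set.Icc 0 t) := hxcont.mono (fun y hy => hy.1)
    have hderiv : ∀ s ∈ Set.Ioo (0:ℝ) t,
        HasDerivWithinAt x ((u s - x s) / (s + 1)) (Set.Ioi s) s := by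
      intro s hs
      have hs1 : (0:ℝ) < s + 1 := by linarith [hs.1]
      by_cases hsT : s < T
      · have hd : HasDerivAt (fun y : ℝ => y / (y + 1))
            ((1 * (s + 1) - s * 1) / ((s + 1) ^ 2)) s :=
          (hasDerivAt_id s).div ((hasDerivAt_id s).add_const 1) hs1.ne'
        have heq : (fun y : ℝ => y / (y + 1)) =ᶠ[nhdsWithin s (Set.Ioi s)] x := by
          have hmem : ∀ᶠ y in nhds s, y ∈ Set.Iio T := isOpen_Iio.eventually_mem hsT
          filter_upwards [hmem.filter_mono nhdsWithin_le_nhds] with y hy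
          simp [hxdef, min_eq_left (le_of_lt (mem_Iio.mp hy))]
        have hval : x s = s / (s + 1) := by simp [hxdef, min_eq_left hsT.le]
        have hmain := (hd.hasDerivWithinAt (s := Set.Ioi s)).congr_of_eventuallyEq
          heq.symm hval
        refine hmain.congr_deriv ?_
        have hus : u s = 1 := by simp [hu, hsT]
        rw [hus, hval]
        field_simp
      · push_neg at hsT
        have hd : HasDerivAt (fun y : ℝ => T / (y + 1))
            ((0 * (s + 1) - T * 1) / ((s + 1) ^ 2)) s :=
          (hasDerivAt_const s T).div ((hasDerivAt_id s).add_const 1) hs1.ne'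
        have heq : (fun y : ℝ => T / (y + 1)) =ᶠ[nhdsWithin s (Set.Ioi s)] x := by
          filter_upwards [self_mem_nhdsWithin] with y hy
          have : T ≤ y := le_trans hsT (le_of_lt hy)
          simp [hxdef, min_eq_right this]
        have hval : x s = T / (s + 1) := by simp [hxdef, min_eq_right hsT]
        have hmain := (hd.hasDerivWithinAt (s := Set.Ioi s)).congr_of_eventuallyEq
          heq.symm hval
        refine hmain.congr_deriv ?_
        have hus : u s = 0 := by simp [hu, not_lt.2 hsT]
        rw [hus, hval]
        field_simp
    have hint : IntervalIntegrable (fun s => (u s - x s) / (s + 1)) volume 0 t := by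
      rw [intervalIntegrable_iff_integrableOn_Ioc_of_le ht]
      apply Measure.integrableOn_of_bounded (M := 1 + T)
      · simp [Real.volume_Ioc]
      · apply Measurable.aestronglyMeasurable
        apply Measurable.div
        · exact humeas.sub ((measurable_id.min measurable_const).div
            (measurable_id.add_const 1))
        · exact measurable_id.add_const 1
      · filter_upwards [ae_restrict_mem measurableSet_Ioc] with s hs
        have hs1 : (1:ℝ) ≤ s + 1 := by linarith [hs.1.le]
        have h0 : (0:ℝ) ≤ min s T := le_min hs.1.le hT0.le
        have hxs : |x s| ≤ T := by
          have hx0' : (0:ℝ) ≤ x s := div_nonneg h0 (by linarith)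
          rw [abs_of_nonneg hx0']
          calc x s ≤ min s T := div_le_self h0 hs1
            _ ≤ T := min_le_right _ _
        calc ‖(u s - x s) / (s + 1)‖ = |u s - x s| / (s + 1) := by
              rw [Real.norm_eq_abs, abs_div, abs_of_pos (by linarith : (0:ℝ) < s + 1)]
          _ ≤ |u s - x s| := div_le_self (abs_nonneg _) hs1
          _ ≤ |u s| + |x s| := abs_sub _ _
          _ ≤ 1 + T := add_le_add (hubd s) hxs
    have := intervalIntegral.integral_eq_sub_of_hasDeriv_right_of_le ht hcont hderiv hint
    rw [this]; ring
  -- apply the hypothesis with u_b = 0, x_b = 0, at time 2T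
  have key := H u (fun _ => 0) humeas measurable_const
    ⟨1, Eventually.of_forall hubd⟩ ⟨0, Eventually.of_forall (by simp)⟩
    x (fun _ => 0) hxcont continuousOn_const hxeq
    (by intro t ht; simp) (2 * T) (by linarith)
  -- simplify the left-hand side
  have hxval : x (2 * T) = T / (2 * T + 1) := by
    simp [hxdef, min_eq_right (by linarith : T ≤ 2 * T)]
  have hβ0 : β |x 0 - 0| (2 * T) = 0 := by
    rw [hx0, sub_zero, abs_zero]
    exact (hβ.2.1 (2 * T) (by linarith)).2
  -- bound the essential supremum
  set f : ℝ → ℝ := fun s => w (2 * T - s) * |u s - 0| with hf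
  set μ' := volume.restrict (Set.Icc (0:ℝ) (2 * T)) with hμ'
  haveI : (ae μ').NeBot := by
    rw [ae_neBot]
    intro h
    have h2 := congrFun (congrArg (fun m => m.toOuterMeasure) h) (Set.Icc (0:ℝ) (2 * T))
    simp only [hμ'] at h2
    rw [show ((volume.restrict (Set.Icc (0:ℝ) (2*T))).toOuterMeasure (Set.Icc (0:ℝ) (2*T)))
        = volume.restrict (Set.Icc (0:ℝ) (2*T)) (Set.Icc (0:ℝ) (2*T)) from rfl,
      Measure.restrict_apply_self, Real.volume_Icc] at h2
    simp at h2
    linarith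
  have hfub : ∀ᵐ s ∂μ', f s ≤ w T := by
    filter_upwards [ae_restrict_mem measurableSet_Icc] with s hs
    by_cases hsT : s < T
    · have hus : u s = 1 := by simp [hu, hsT]
      have : f s = w (2 * T - s) := by simp [hf, hus]
      rw [this]
      exact wanti (by simp [hT0.le]) (by simp; linarith [hs.2]) (by linarith)
    · have hus : u s = 0 := by simp [hu, not_lt.1 hsT]
      have : f s = 0 := by simp [hf, hus]
      rw [this]
      exact (wbd T hT0.le).1
  have hflb : ∀ᵐ s ∂μ', (0:ℝ) ≤ f s := by
    filter_upwards [ae_restrict_mem measurableSet_Icc] with s hs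
    exact mul_nonneg ((wbd _ (by linarith [hs.2])).1) (abs_nonneg _)
  have hcobdd : IsCoboundedUnder (· ≤ ·) (ae μ') f :=
    isCoboundedUnder_le_of_eventually_le (ae μ') hflb
  have hbdd : IsBoundedUnder (· ≤ ·) (ae μ') f :=
    isBoundedUnder_of_eventually_le hfub
  have hE1 : essSupOn f (Set.Icc 0 (2 * T)) ≤ w T := limsup_le_of_le hcobdd hfub
  have hE0 : (0:ℝ) ≤ essSupOn f (Set.Icc 0 (2 * T)) :=
    le_limsup_of_frequently_le hflb.frequently hbdd
  have hγE : γ (essSupOn f (Set.Icc 0 (2 * T))) ≤ γ (w T) :=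
    γmono.monotoneOn hE0 (wbd T hT0.le).1 hE1
  -- put everything together
  have h13 : (1:ℝ)/3 ≤ T / (2 * T + 1) := by
    rw [div_le_div_iff₀ (by norm_num) (by linarith)]; linarith
  rw [hxval, sub_zero, hβ0, abs_of_nonneg (by positivity)] at key
  have : T / (2 * T + 1) ≤ γ (w T) := by
    calc T / (2 * T + 1) ≤ 0 + γ (essSupOn f (Set.Icc 0 (2 * T))) := key
      _ = γ (essSupOn f (Set.Icc 0 (2 * T))) := zero_add _
      _ ≤ γ (w T) := hγE
  linarith
end
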